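/- arXiv:1601.06972 — 9 statements merged into one kernel-verified Lean document; each statement's English description precedes it below -/
import Mathlib

section
/- Let n = 2 and, for positive reals (λ₁₂, λ₁₃, λ₂₃), define the Ricci components r_{ij} by Sakane's formula. Then (λ₁₂, λ₁₃, λ₂₃) is an Einstein solution (i.e., r₁₂ = r₁₃ = r₂₃) if and only if there exists a real c > 0 such that (λ₁₂, λ₁₃, λ₂₃) equals c·(1,1,1), c·(2,1,1), c·(1,2,1), or c·(1,1,2). -/
open Finset

/-- Pairs `i < j` in `{1, …, n+1}` (modeled as `Fin (n+1)`), indexing the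
positive roots / isotropy summands of the full flag manifold `SU(n+1)/Tⁿ`. -/
abbrev FlagIdx (n : ℕ) := {p : Fin (n + 1) × Fin (n + 1) // p.1 < p.2}

/-- Symmetric extension `λ_{ji} := λ_{ij}` of a family indexed by pairs `i < j`.
(The diagonal value is irrelevant; we set it to `1`.) -/
def symExt (n : ℕ) (lam : FlagIdx n → ℝ) (i j : Fin (n + 1)) : ℝ :=
  if h : i < j then lam ⟨(i, j), h⟩
  else if h : j < i then lam ⟨(j, i), h⟩
  else 1

/-- Sakane's formula for the component `r_{ij}` of the Ricci tensor of the
invariant metric determined by `lam` on `SU(n+1)/Tⁿ`. -/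
noncomputable def ricci (n : ℕ) (lam : FlagIdx n → ℝ) (i j : Fin (n + 1)) : ℝ :=
  1 / (2 * symExt n lam i j) + (1 / (4 * ((n : ℝ) + 1))) *
    ∑ k ∈ univ.filter (fun k : Fin (n + 1) => k ≠ i ∧ k ≠ j),
      (symExt n lam i j / (symExt n lam i k * symExt n lam k j)
        - symExt n lam i k / (symExt n lam i j * symExt n lam k j)
        - symExt n lam j k / (symExt n lam i j * symExt n lam i k))

/-- `lam` is an Einstein solution with Einstein constant `k`:
`r_{ij}(lam) = k` for all `1 ≤ i < j ≤ n+1`. -/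
def IsEinstein (n : ℕ) (lam : FlagIdx n → ℝ) (k : ℝ) : Prop :=
  ∀ i j : Fin (n + 1), i < j → ricci n lam i j = k

/-- Scalar curvature `S(λ) = 2 Σ_{i<j} r_{ij}(λ)`. -/
noncomputable def scalarCurv (n : ℕ) (lam : FlagIdx n → ℝ) : ℝ :=
  2 * ∑ p : FlagIdx n, ricci n lam p.1.1 p.1.2

/-- Volume `V(λ) = Π_{i<j} λ_{ij}²`. -/
noncomputable def vol (n : ℕ) (lam : FlagIdx n → ℝ) : ℝ :=
  ∏ p : FlagIdx n, (lam p) ^ 2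

/-- Scale invariant `H(λ) = V(λ)^{1/d} · S(λ)`, where `d = n(n+1)`. -/
noncomputable def scaleInv (n : ℕ) (lam : FlagIdx n → ℝ) : ℝ :=
  vol n lam ^ ((1 : ℝ) / ((n : ℝ) * ((n : ℝ) + 1))) * scalarCurv n lam

/-- The Kähler–Einstein tuple `λ_{ij} = |σ(i) − σ(j)|` associated to a
permutation `σ` (i.e. to an order of the root system). -/
noncomputable def kahlerFam (n : ℕ) (σ : Equiv.Perm (Fin (n + 1))) : FlagIdx n → ℝ :=
  fun p => |((σ p.1.1 : ℕ) : ℝ) - ((σ p.1.2 : ℕ) : ℝ)|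

/-- The family `λ_{ij} = n/(n+2)` if `t ∈ {i, j}`, and `λ_{ij} = 1` otherwise. -/
noncomputable def tFam (n : ℕ) (t : Fin (n + 1)) : FlagIdx n → ℝ :=
  fun p => if p.1.1 = t ∨ p.1.2 = t then (n : ℝ) / ((n : ℝ) + 2) else 1

/-- Two families are proportional if one is a positive scalar multiple of the other. -/
def Proportional (n : ℕ) (f g : FlagIdx n → ℝ) : Prop :=
  ∃ c : ℝ, 0 < c ∧ ∀ p, f p = c * g p

lemma ric01 (lam : FlagIdx 2 → ℝ) :
    ricci 2 lam 0 1 = 1/(2 * lam ⟨(0,1), by decide⟩) + (1/12) *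
      (lam ⟨(0,1), by decide⟩ / (lam ⟨(0,2), by decide⟩ * lam ⟨(1,2), by decide⟩)
       - lam ⟨(0,2), by decide⟩ / (lam ⟨(0,1), by decide⟩ * lam ⟨(1,2), by decide⟩)
       - lam ⟨(1,2), by decide⟩ / (lam ⟨(0,1), by decide⟩ * lam ⟨(0,2), by decide⟩)) := by
  have h : (univ.filter (fun k : Fin 3 => k ≠ 0 ∧ k ≠ 1)) = {2} := by decide
  rw [ricci, h]
  norm_num [symExt, show ((0:Fin 3) < 1) from by decide, show ((0:Fin 3) < 2) from by decide,
    show ((1:Fin 3) < 2) from by decide]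
  all_goals try (split_ifs with h1 <;> first | exact absurd h1 (by decide) | ring)
  all_goals try ring

lemma ric02 (lam : FlagIdx 2 → ℝ) :
    ricci 2 lam 0 2 = 1/(2 * lam ⟨(0,2), by decide⟩) + (1/12) *
      (lam ⟨(0,2), by decide⟩ / (lam ⟨(0,1), by decide⟩ * lam ⟨(1,2), by decide⟩)
       - lam ⟨(0,1), by decide⟩ / (lam ⟨(0,2), by decide⟩ * lam ⟨(1,2), by decide⟩)
       - lam ⟨(1,2), by decide⟩ / (lam ⟨(0,2), by decide⟩ * lam ⟨(0,1), by decide⟩)) := by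
  have h : (univ.filter (fun k : Fin 3 => k ≠ 0 ∧ k ≠ 2)) = {1} := by decide
  rw [ricci, h]
  norm_num [symExt, show ((0:Fin 3) < 1) from by decide, show ((0:Fin 3) < 2) from by decide,
    show ((1:Fin 3) < 2) from by decide]
  all_goals try (split_ifs with h1 <;> first | exact absurd h1 (by decide) | ring)
  all_goals try ring

lemma ric12 (lam : FlagIdx 2 → ℝ) :
    ricci 2 lam 1 2 = 1/(2 * lam ⟨(1,2), by decide⟩) + (1/12) *
      (lam ⟨(1,2), by decide⟩ / (lam ⟨(0,1), by decide⟩ * lam ⟨(0,2), by decide⟩)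
       - lam ⟨(0,1), by decide⟩ / (lam ⟨(1,2), by decide⟩ * lam ⟨(0,2), by decide⟩)
       - lam ⟨(0,2), by decide⟩ / (lam ⟨(1,2), by decide⟩ * lam ⟨(0,1), by decide⟩)) := by
  have h : (univ.filter (fun k : Fin 3 => k ≠ 1 ∧ k ≠ 2)) = {0} := by decide
  rw [ricci, h]
  norm_num [symExt, show ((0:Fin 3) < 1) from by decide, show ((0:Fin 3) < 2) from by decide,
    show ((1:Fin 3) < 2) from by decide]
  all_goals try (split_ifs with h1 <;> first | exact absurd h1 (by decide) | ring)
  all_goals try ring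

set_option maxHeartbeats 2000000 in
/-- For `n = 2`, a triple of positive reals `(λ₁₂, λ₁₃, λ₂₃)` is an
Einstein solution (i.e. `r₁₂ = r₁₃ = r₂₃`) iff it is a positive multiple of
`(1,1,1)`, `(2,1,1)`, `(1,2,1)` or `(1,1,2)`. -/
theorem su3_einstein_classification (lam : FlagIdx 2 → ℝ) (hpos : ∀ p, 0 < lam p) :
    (ricci 2 lam 0 1 = ricci 2 lam 0 2 ∧ ricci 2 lam 0 2 = ricci 2 lam 1 2) ↔
      ∃ c : ℝ, 0 < c ∧
        ((lam ⟨(0, 1), by decide⟩ = c ∧ lam ⟨(0, 2), by decide⟩ = c ∧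
            lam ⟨(1, 2), by decide⟩ = c) ∨
         (lam ⟨(0, 1), by decide⟩ = 2 * c ∧ lam ⟨(0, 2), by decide⟩ = c ∧
            lam ⟨(1, 2), by decide⟩ = c) ∨
         (lam ⟨(0, 1), by decide⟩ = c ∧ lam ⟨(0, 2), by decide⟩ = 2 * c ∧
            lam ⟨(1, 2), by decide⟩ = c) ∨
         (lam ⟨(0, 1), by decide⟩ = c ∧ lam ⟨(0, 2), by decide⟩ = c ∧
            lam ⟨(1, 2), by decide⟩ = 2 * c)) := by
  set x := lam ⟨(0,1), by decide⟩ with hxdef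
  set y := lam ⟨(0,2), by decide⟩ with hydef
  set z := lam ⟨(1,2), by decide⟩ with hzdef
  have hx : 0 < x := hpos _
  have hy : 0 < y := hpos _
  have hz : 0 < z := hpos _
  have hx0 : x ≠ 0 := ne_of_gt hx
  have hy0 : y ≠ 0 := ne_of_gt hy
  have hz0 : z ≠ 0 := ne_of_gt hz
  have key1 : (y - x) * (3*z - x - y) = 6*x*y*z * (ricci 2 lam 0 1 - ricci 2 lam 0 2) := by
    rw [ric01, ric02, ← hxdef, ← hydef, ← hzdef]
    field_simp
    ring
  have key2 : (z - y) * (3*x - y - z) = 6*x*y*z * (ricci 2 lam 0 2 - ricci 2 lam 1 2) := by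
    rw [ric02, ric12, ← hxdef, ← hydef, ← hzdef]
    field_simp
    ring
  constructor
  · rintro ⟨h1, h2⟩
    have e1 : (y - x) * (3*z - x - y) = 0 := by rw [key1, h1]; ring
    have e2 : (z - y) * (3*x - y - z) = 0 := by rw [key2, h2]; ring
    rcases mul_eq_zero.1 e1 with f1 | f1 <;> rcases mul_eq_zero.1 e2 with f2 | f2
    · exact ⟨x, hx, Or.inl ⟨rfl, by linarith, by linarith⟩⟩
    · exact ⟨x, hx, Or.inr (Or.inr (Or.inr ⟨rfl, by linarith, by linarith⟩))⟩
    · exact ⟨z, hz, Or.inr (Or.inl ⟨by linarith, by linarith, rfl⟩)⟩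
    · exact ⟨x, hx, Or.inr (Or.inr (Or.inl ⟨rfl, by linarith, by linarith⟩))⟩
  · rintro ⟨c, hc, h | h | h | h⟩ <;>
      obtain ⟨e1, e2, e3⟩ := h <;>
      rw [ric01, ric02, ric12, ← hxdef, ← hydef, ← hzdef, e1, e2, e3] <;>
      have hc0 : c ≠ 0 := ne_of_gt hc <;>
      constructor <;> (clear_value x y z) <;> (clear * - hc0) <;> field_simp <;> ring
end

section
/- Let n ≥ 2 be an integer and let σ be any permutation of {1, …, n+1}. Then the family λ_{ij} = |σ(i) − σ(j)| has scalar curvature S(λ) = n and volume V(λ) = (Π_{k=1}^{n} k!)², and hence its scale invariant is H(λ) = n · (Π_{k=1}^{n} k!)^{2/(n(n+1))}. -/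
open Finset

lemma term_eq (p q : ℝ) (hp : p ≠ 0) (hq : q ≠ 0) (hpq : p + q ≠ 0) :
    |p+q| / (|p| * |q|) - |p| / (|p+q| * |q|) - |q| / (|p+q| * |p|)
      = (if 0 < p * q then 2 else -2) / |p+q| := by
  have hap : |p| ≠ 0 := abs_ne_zero.2 hp
  have haq : |q| ≠ 0 := abs_ne_zero.2 hq
  have hapq : |p+q| ≠ 0 := abs_ne_zero.2 hpq
  have e : ∀ z x y : ℝ, x ≠ 0 → y ≠ 0 → z ≠ 0 →
      z/(x*y) - x/(z*y) - y/(z*x) = (z^2-x^2-y^2)/(z*(x*y)) := by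
    intro z x y hx hy hz; field_simp
  rw [e _ _ _ hap haq hapq, sq_abs, sq_abs, sq_abs]
  rw [show (p+q)^2 - p^2 - q^2 = 2 * (p*q) by ring]
  rcases lt_or_gt_of_ne (mul_ne_zero hp hq) with h | h
  · rw [if_neg (not_lt.2 h.le)]
    rw [show |p| * |q| = -(p*q) by rw [← abs_mul, abs_of_neg h]]
    rw [div_eq_div_iff (mul_ne_zero hapq (neg_ne_zero.2 h.ne)) hapq]
    ring
  · rw [if_pos h]
    rw [show |p| * |q| = p*q by rw [← abs_mul, abs_of_pos h]]
    rw [div_eq_div_iff (mul_ne_zero hapq h.ne') hapq]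
    ring

lemma between_iff (x y z : ℝ) :
    0 < (x - z) * (z - y) ↔ (min x y < z ∧ z < max x y) := by
  rw [mul_pos_iff]
  constructor
  · rintro (⟨h1, h2⟩ | ⟨h1, h2⟩)
    · exact ⟨min_lt_iff.2 (Or.inr (by linarith)), lt_max_iff.2 (Or.inl (by linarith))⟩
    · exact ⟨min_lt_iff.2 (Or.inl (by linarith)), lt_max_iff.2 (Or.inr (by linarith))⟩
  · rintro ⟨h1, h2⟩
    rw [min_lt_iff] at h1; rw [lt_max_iff] at h2
    rcases h1 with h1 | h1 <;> rcases h2 with h2 | h2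
    · exact (lt_asymm h1 h2).elim
    · exact Or.inr ⟨by linarith, by linarith⟩
    · exact Or.inl ⟨by linarith, by linarith⟩
    · exact (lt_asymm h1 h2).elim

lemma symExt_kahler (n : ℕ) (σ : Equiv.Perm (Fin (n+1))) {i j : Fin (n+1)} (h : i ≠ j) :
    symExt n (kahlerFam n σ) i j = |((σ i : ℕ) : ℝ) - ((σ j : ℕ) : ℝ)| := by
  unfold symExt kahlerFam
  rcases lt_or_gt_of_ne h with hlt | hgt
  · rw [dif_pos hlt]
  · rw [dif_neg (not_lt.2 hgt.le), dif_pos hgt, abs_sub_comm]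

lemma ricci_kahler (n : ℕ) (σ : Equiv.Perm (Fin (n+1))) {i j : Fin (n+1)} (hij : i ≠ j) :
    ricci n (kahlerFam n σ) i j = 1 / ((n : ℝ) + 1) := by
  have hσij : σ i ≠ σ j := fun h => hij (σ.injective h)
  set a : ℕ := (σ i : ℕ) with ha
  set b : ℕ := (σ j : ℕ) with hb
  have hab : a ≠ b := fun h => hσij (Fin.val_injective h)
  set loF : Fin (n+1) := min (σ i) (σ j) with hloF
  set hiF : Fin (n+1) := max (σ i) (σ j) with hhiF
  have hlo : (loF : ℕ) = min a b := Fin.val_strictMono.monotone.map_min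
  have hhi : (hiF : ℕ) = max a b := Fin.val_strictMono.monotone.map_max
  set d : ℕ := (hiF : ℕ) - (loF : ℕ) with hd
  have hd1 : 1 ≤ d := by
    have : (loF:ℕ) < (hiF:ℕ) := by rw [hlo, hhi]; omega
    omega
  have hdn : d ≤ n := by have := hiF.isLt; omega
  -- L = |a - b| = d
  have hL : |((a:ℕ):ℝ) - ((b:ℕ):ℝ)| = (d : ℝ) := by
    rw [hd, hlo, hhi]
    rcases le_total a b with h | h
    · rw [abs_of_nonpos (by simp [Nat.cast_le.2 h] : ((a:ℕ):ℝ) - b ≤ 0)]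
      rw [min_eq_left h, max_eq_right h]
      push_cast [Nat.sub_le, h]; ring
    · rw [abs_of_nonneg (by simp [Nat.cast_le.2 h] : (0:ℝ) ≤ (a:ℝ) - b)]
      rw [min_eq_right h, max_eq_left h]
      push_cast [h]; ring
  have hdpos : (0:ℝ) < (d:ℝ) := by exact_mod_cast hd1
  -- the summand
  have key : ∀ k ∈ univ.filter (fun k : Fin (n + 1) => k ≠ i ∧ k ≠ j),
      (symExt n (kahlerFam n σ) i j /
          (symExt n (kahlerFam n σ) i k * symExt n (kahlerFam n σ) k j)
        - symExt n (kahlerFam n σ) i k /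
          (symExt n (kahlerFam n σ) i j * symExt n (kahlerFam n σ) k j)
        - symExt n (kahlerFam n σ) j k /
          (symExt n (kahlerFam n σ) i j * symExt n (kahlerFam n σ) i k))
      = (if σ k ∈ Finset.Ioo loF hiF then (2:ℝ) else -2) / (d : ℝ) := by
    intro k hk
    simp only [mem_filter, mem_univ, true_and] at hk
    obtain ⟨hki, hkj⟩ := hk
    set m : ℕ := (σ k : ℕ) with hm
    have hAm : a ≠ m := fun h => hki (σ.injective (Fin.val_injective h)).symm
    have hBm : b ≠ m := fun h => hkj (σ.injective (Fin.val_injective h)).symm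
    have ham : (a:ℝ) ≠ (m:ℝ) := by exact_mod_cast hAm
    have hbm : (b:ℝ) ≠ (m:ℝ) := by exact_mod_cast hBm
    set p : ℝ := (a:ℝ) - (m:ℝ) with hp
    set q : ℝ := (m:ℝ) - (b:ℝ) with hq
    have hpq : p + q = (a:ℝ) - (b:ℝ) := by ring
    rw [symExt_kahler n σ hij, symExt_kahler n σ hki.symm,
        symExt_kahler n σ hkj, symExt_kahler n σ (Ne.symm hkj)]
    have e1 : |((σ i:ℕ):ℝ) - ((σ j:ℕ):ℝ)| = |p+q| := by rw [hpq]
    have e2 : |((σ i:ℕ):ℝ) - ((σ k:ℕ):ℝ)| = |p| := rfl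
    have e3 : |((σ k:ℕ):ℝ) - ((σ j:ℕ):ℝ)| = |q| := rfl
    have e4 : |((σ j:ℕ):ℝ) - ((σ k:ℕ):ℝ)| = |q| := by rw [abs_sub_comm]
    rw [e1, e2, e3, e4]
    rw [term_eq p q (sub_ne_zero.2 ham) (sub_ne_zero.2 (Ne.symm hbm))
        (by rw [hpq]; exact sub_ne_zero.2 (by exact_mod_cast hab))]
    rw [hpq, hL]
    have hiff : (0 < p * q) ↔ σ k ∈ Finset.Ioo loF hiF := by
      rw [hp, hq, between_iff, Finset.mem_Ioo, Fin.lt_def, Fin.lt_def, hlo, hhi,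
        ← Nat.cast_min (α := ℝ), ← Nat.cast_max (α := ℝ), Nat.cast_lt, Nat.cast_lt]
    simp only [hiff]
  -- counting
  have hFcard : (univ.filter (fun k : Fin (n+1) => k ≠ i ∧ k ≠ j)).card = n - 1 := by
    rw [show univ.filter (fun k : Fin (n+1) => k ≠ i ∧ k ≠ j) = univ \ {i, j} by
      ext k; simp [and_comm]]
    rw [Finset.card_sdiff_of_subset (by simp)]
    rw [Finset.card_univ, Fintype.card_fin,
      Finset.card_insert_of_notMem (by simp [hij]), Finset.card_singleton]
    omega
  have hsub : (univ.filter (fun k : Fin (n+1) => k ≠ i ∧ k ≠ j)).filter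
      (fun k => σ k ∈ Finset.Ioo loF hiF)
      = univ.filter (fun k => σ k ∈ Finset.Ioo loF hiF) := by
    ext k
    simp only [Finset.mem_filter, Finset.mem_univ, true_and]
    constructor
    · exact fun h => h.2
    · intro h
      refine ⟨⟨?_, ?_⟩, h⟩
      · rintro rfl
        have hm := Finset.mem_Ioo.1 h
        rcases le_total (σ k) (σ j) with hle | hle
        · exact absurd hm.1 (by simp [hloF, min_eq_left hle])
        · exact absurd hm.2 (by simp [hhiF, max_eq_left hle])
      · rintro rfl
        have hm := Finset.mem_Ioo.1 h
        rcases le_total (σ i) (σ k) with hle | hle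
        · exact absurd hm.2 (by simp [hhiF, max_eq_right hle])
        · exact absurd hm.1 (by simp [hloF, min_eq_right hle])
  have hc1 : ((univ.filter (fun k : Fin (n+1) => k ≠ i ∧ k ≠ j)).filter
      (fun k => σ k ∈ Finset.Ioo loF hiF)).card = d - 1 := by
    rw [hsub]
    have : (univ.filter (fun k : Fin (n+1) => σ k ∈ Finset.Ioo loF hiF)).card
        = (Finset.Ioo loF hiF).card := by
      apply Finset.card_bij' (fun k _ => σ k) (fun m _ => σ.symm m)
      · intro k hk; exact (Finset.mem_filter.1 hk).2
      · intro m hm; simpa using hm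
      · intro k _; simp
      · intro m _; simp
    rw [this, Fin.card_Ioo]
  have hsplit := Finset.card_filter_add_card_filter_not
    (s := univ.filter (fun k : Fin (n+1) => k ≠ i ∧ k ≠ j))
    (p := fun k => σ k ∈ Finset.Ioo loF hiF)
  have hc2 : ((univ.filter (fun k : Fin (n+1) => k ≠ i ∧ k ≠ j)).filter
      (fun k => ¬ σ k ∈ Finset.Ioo loF hiF)).card = n - d := by
    omega
  -- assemble
  unfold ricci
  rw [Finset.sum_congr rfl key, symExt_kahler n σ hij]
  rw [show |((σ i:ℕ):ℝ) - ((σ j:ℕ):ℝ)| = (d:ℝ) from hL]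
  rw [← Finset.sum_div, Finset.sum_ite, Finset.sum_const, Finset.sum_const,
    hc1, hc2, nsmul_eq_mul, nsmul_eq_mul]
  have h2 : ((d - 1 : ℕ):ℝ) = (d:ℝ) - 1 := by push_cast [Nat.cast_sub hd1]; ring
  have h3 : ((n - d : ℕ):ℝ) = (n:ℝ) - (d:ℝ) := by push_cast [Nat.cast_sub hdn]; ring
  rw [h2, h3]
  have hn1 : (n:ℝ) + 1 ≠ 0 := by positivity
  field_simp
  ring

section Pairs
variable (m : ℕ)

lemma filter_ne_split :
    (univ.filter (fun p : Fin m × Fin m => p.1 ≠ p.2))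
      = (univ.filter (fun p : Fin m × Fin m => p.1 < p.2))
        ∪ (univ.filter (fun p : Fin m × Fin m => p.2 < p.1)) := by
  ext p
  simp only [mem_filter, mem_univ, true_and, Finset.mem_union]
  exact ne_iff_lt_or_gt

lemma filter_lt_gt_disj :
    Disjoint (univ.filter (fun p : Fin m × Fin m => p.1 < p.2))
      (univ.filter (fun p : Fin m × Fin m => p.2 < p.1)) := by
  rw [Finset.disjoint_left]
  intro p hp hq
  simp only [mem_filter, mem_univ, true_and] at hp hq
  exact lt_asymm hp hq

lemma prod_gt_eq_prod_lt (f : Fin m × Fin m → ℝ) (hf : ∀ a b, f (a, b) = f (b, a)) :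
    ∏ p ∈ univ.filter (fun p : Fin m × Fin m => p.2 < p.1), f p
      = ∏ p ∈ univ.filter (fun p : Fin m × Fin m => p.1 < p.2), f p := by
  refine Finset.prod_bij' (fun p _ => p.swap) (fun p _ => p.swap) ?_ ?_ ?_ ?_ ?_ <;>
    rintro ⟨x, y⟩ hp <;>
    simp only [mem_filter, mem_univ, true_and, Prod.swap_prod_mk, Prod.fst, Prod.snd] at hp ⊢
  · exact hp
  · exact hp
  · exact hf x y

lemma card_gt_eq_card_lt :
    (univ.filter (fun p : Fin m × Fin m => p.2 < p.1)).card
      = (univ.filter (fun p : Fin m × Fin m => p.1 < p.2)).card := by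
  refine Finset.card_bij' (fun p _ => p.swap) (fun p _ => p.swap) ?_ ?_ ?_ ?_ <;>
    rintro ⟨x, y⟩ hp <;>
    simp only [mem_filter, mem_univ, true_and, Prod.swap_prod_mk, Prod.fst, Prod.snd] at hp ⊢
  · exact hp
  · exact hp

lemma prod_ne_eq_sq (f : Fin m × Fin m → ℝ) (hf : ∀ a b, f (a, b) = f (b, a)) :
    ∏ p ∈ univ.filter (fun p : Fin m × Fin m => p.1 ≠ p.2), f p
      = (∏ p ∈ univ.filter (fun p : Fin m × Fin m => p.1 < p.2), f p) ^ 2 := by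
  rw [filter_ne_split, Finset.prod_union (filter_lt_gt_disj m),
    prod_gt_eq_prod_lt m f hf]
  ring

lemma card_lt_pairs : 2 * (univ.filter (fun p : Fin m × Fin m => p.1 < p.2)).card
    = m * m - m := by
  have h2 : (univ.filter (fun p : Fin m × Fin m => p.1 ≠ p.2)) = Finset.univ.offDiag := by
    ext p; simp [Finset.mem_offDiag]
  have := congrArg Finset.card (filter_ne_split m)
  rw [Finset.card_union_of_disjoint (filter_lt_gt_disj m), card_gt_eq_card_lt, h2,
    Finset.offDiag_card, Finset.card_univ, Fintype.card_fin] at this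
  omega

end Pairs

lemma prod_range_sub_eq_factorial (J : ℕ) : ∏ i ∈ Finset.range J, (J - i) = J.factorial := by
  induction J with
  | zero => simp
  | succ J ih =>
    rw [Finset.prod_range_succ' (fun i => J + 1 - i) J]
    simp only [Nat.succ_sub_succ, Nat.sub_zero]
    rw [ih, Nat.factorial_succ, Nat.mul_comm]

lemma prod_lt_sub (n : ℕ) :
    ∏ p ∈ univ.filter (fun p : Fin (n+1) × Fin (n+1) => p.1 < p.2),
      ((p.2 : ℕ) - (p.1 : ℕ)) = ∏ k ∈ Finset.Icc 1 n, Nat.factorial k := by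
  rw [Finset.prod_filter, Fintype.prod_prod_type, Finset.prod_comm]
  have inner : ∀ j : Fin (n+1),
      (∏ i : Fin (n+1), if (i, j).1 < (i, j).2 then ((j : ℕ) - (i : ℕ)) else 1)
        = ((j : ℕ)).factorial := by
    intro j
    have e1 : (∏ i : Fin (n+1), if (i, j).1 < (i, j).2 then ((j : ℕ) - (i : ℕ)) else 1)
        = ∏ i : Fin (n+1), (fun I : ℕ => if I < (j:ℕ) then ((j : ℕ) - I) else 1) (i : ℕ) := by
      apply Finset.prod_congr rfl
      intro i _
      simp only [Fin.lt_def]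
    rw [e1, Fin.prod_univ_eq_prod_range (fun I : ℕ => if I < (j:ℕ) then ((j : ℕ) - I) else 1) (n+1)]
    have e2 : Finset.range (n+1) = Finset.range (n+1) := rfl
    rw [show (∏ I ∈ Finset.range (n+1), if I < (j:ℕ) then ((j:ℕ) - I) else 1)
        = ∏ I ∈ (Finset.range (n+1)).filter (fun I => I < (j:ℕ)), ((j:ℕ) - I) from
      (Finset.prod_filter _ _).symm]
    rw [show (Finset.range (n+1)).filter (fun I => I < (j:ℕ)) = Finset.range (j:ℕ) by
      ext I; simp only [Finset.mem_filter, Finset.mem_range]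
      have := j.isLt; omega]
    exact prod_range_sub_eq_factorial (j : ℕ)
  rw [Finset.prod_congr rfl (fun j _ => inner j)]
  rw [Fin.prod_univ_eq_prod_range (fun J => J.factorial) (n+1)]
  rw [Finset.range_eq_Ico, Finset.prod_eq_prod_Ico_succ_bot (by omega) Nat.factorial]
  rw [Nat.factorial_zero, one_mul, Finset.Ico_add_one_right_eq_Icc]

/-- For every `n ≥ 2` and every permutation `σ`, the family
`λ_{ij} = |σ(i) − σ(j)|` has `S(λ) = n`, `V(λ) = (Π_{k=1}^{n} k!)²` and hence
`H(λ) = n · (Π_{k=1}^{n} k!)^{2/(n(n+1))}`. -/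
theorem kahler_invariants (n : ℕ) (hn : 2 ≤ n) (σ : Equiv.Perm (Fin (n + 1))) :
    scalarCurv n (kahlerFam n σ) = (n : ℝ) ∧
    vol n (kahlerFam n σ) = ((∏ k ∈ Finset.Icc 1 n, Nat.factorial k : ℕ) : ℝ) ^ 2 ∧
    scaleInv n (kahlerFam n σ) =
      (n : ℝ) * ((∏ k ∈ Finset.Icc 1 n, Nat.factorial k : ℕ) : ℝ) ^
        ((2 : ℝ) / ((n : ℝ) * ((n : ℝ) + 1))) := by
  set K : ℕ := ∏ k ∈ Finset.Icc 1 n, Nat.factorial k with hKdef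
  -- scalar curvature
  have hS : scalarCurv n (kahlerFam n σ) = (n : ℝ) := by
    unfold scalarCurv
    rw [Finset.sum_congr rfl
      (fun (p : FlagIdx n) _ => ricci_kahler n σ (ne_of_lt p.2))]
    rw [Finset.sum_const, Finset.card_univ, nsmul_eq_mul]
    have hc' : 2 * Fintype.card (FlagIdx n) = n * (n+1) := by
      rw [Fintype.card_subtype]
      have h1 := card_lt_pairs (n+1)
      have h2 : (n+1)*(n+1) = n*(n+1) + (n+1) := by ring
      omega
    have hcR : 2 * ((Fintype.card (FlagIdx n)):ℝ) = (n:ℝ) * ((n:ℝ)+1) := by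
      exact_mod_cast hc'
    have hne : (n:ℝ) + 1 ≠ 0 := by positivity
    field_simp
    linarith
  -- volume
  have hV : vol n (kahlerFam n σ) = (K:ℝ) ^ 2 := by
    unfold vol kahlerFam
    rw [← Finset.prod_subtype
      (univ.filter (fun p : Fin (n+1) × Fin (n+1) => p.1 < p.2)) (by simp)
      (fun p : Fin (n+1) × Fin (n+1) =>
        |((σ p.1 : ℕ) : ℝ) - ((σ p.2 : ℕ) : ℝ)| ^ 2)]
    rw [Finset.prod_pow]
    rw [← prod_ne_eq_sq (n+1) (fun p => |((σ p.1 : ℕ) : ℝ) - ((σ p.2 : ℕ) : ℝ)|)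
      (fun a b => by simp only [abs_sub_comm])]
    have hre : ∏ p ∈ univ.filter (fun p : Fin (n+1) × Fin (n+1) => p.1 ≠ p.2),
        |((σ p.1 : ℕ) : ℝ) - ((σ p.2 : ℕ) : ℝ)|
        = ∏ p ∈ univ.filter (fun p : Fin (n+1) × Fin (n+1) => p.1 ≠ p.2),
        |((p.1 : ℕ) : ℝ) - ((p.2 : ℕ) : ℝ)| := by
      refine Finset.prod_bij' (fun p _ => (σ p.1, σ p.2)) (fun p _ => (σ.symm p.1, σ.symm p.2))
        ?_ ?_ ?_ ?_ ?_ <;> rintro ⟨x, y⟩ hp <;>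
        simp only [mem_filter, mem_univ, true_and, ne_eq,
          EmbeddingLike.apply_eq_iff_eq, Equiv.apply_symm_apply,
          Equiv.symm_apply_apply, Prod.mk.injEq] at hp ⊢ <;>
        first
          | exact hp
          | exact ⟨rfl, rfl⟩
          | rfl
    rw [hre]
    rw [prod_ne_eq_sq (n+1) (fun p => |((p.1 : ℕ) : ℝ) - ((p.2 : ℕ) : ℝ)|)
      (fun a b => by simp only [abs_sub_comm])]
    have hcast : ∏ p ∈ univ.filter (fun p : Fin (n+1) × Fin (n+1) => p.1 < p.2),
        |((p.1 : ℕ) : ℝ) - ((p.2 : ℕ) : ℝ)| = (K:ℝ) := by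
      rw [hKdef, ← prod_lt_sub n, Nat.cast_prod]
      apply Finset.prod_congr rfl
      rintro ⟨x, y⟩ hp
      simp only [mem_filter, mem_univ, true_and] at hp
      have hxy : (x:ℕ) < (y:ℕ) := hp
      rw [abs_of_nonpos (by simp [Nat.cast_le.2 hxy.le] : ((x:ℕ):ℝ) - ((y:ℕ):ℝ) ≤ 0)]
      push_cast [Nat.cast_sub hxy.le]
      ring
    rw [hcast]
  refine ⟨hS, hV, ?_⟩
  unfold scaleInv
  rw [hS, hV]
  have hK : (0:ℝ) ≤ (K:ℝ) := Nat.cast_nonneg _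
  rw [← Real.rpow_natCast ((K:ℝ)) 2, ← Real.rpow_mul hK]
  rw [show ((2:ℕ):ℝ) * ((1:ℝ) / ((n : ℝ) * ((n : ℝ) + 1)))
      = (2:ℝ) / ((n : ℝ) * ((n : ℝ) + 1)) by push_cast; ring]
  ring
end

section
/- Let n ≥ 2 be an integer and fix t ∈ {1, …, n+1}. Then the family defined by λ_{ij} = n/(n+2) if t ∈ {i,j} and λ_{ij} = 1 otherwise is an Einstein solution, with Einstein constant k = 1/2 + ((n+2)² − n³)/(4 n² (n+1)). -/
open Finset

/-- For every `n ≥ 2` and `t ∈ {1, …, n+1}`, the family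
`λ_{ij} = n/(n+2)` if `t ∈ {i,j}` and `λ_{ij} = 1` otherwise is an Einstein
solution, with Einstein constant `1/2 + ((n+2)² − n³)/(4n²(n+1))`. -/
theorem tFam_einstein (n : ℕ) (hn : 2 ≤ n) (t : Fin (n + 1)) :
    IsEinstein n (tFam n t)
      (1 / 2 + (((n : ℝ) + 2) ^ 2 - (n : ℝ) ^ 3) / (4 * (n : ℝ) ^ 2 * ((n : ℝ) + 1))) := by
  intro i j hij
  have hij' : i ≠ j := ne_of_lt hij
  have hn0 : (0:ℝ) < (n:ℝ) := by
    have : (0:ℕ) < n := by omega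
    exact_mod_cast this
  have hn2 : ((n:ℝ) + 2) ≠ 0 := by positivity
  have hn1 : ((n:ℝ) + 1) ≠ 0 := by positivity
  have hnne : (n:ℝ) ≠ 0 := ne_of_gt hn0
  set a : ℝ := (n:ℝ)/((n:ℝ)+2) with ha
  have ha0 : a ≠ 0 := div_ne_zero hnne hn2
  have hsym : ∀ x y : Fin (n+1), x ≠ y →
      symExt n (tFam n t) x y = if x = t ∨ y = t then a else 1 := by
    intro x y hxy
    rcases lt_or_gt_of_ne hxy with h | h
    · simp [symExt, h, tFam, ha]
    · simp [symExt, h, not_lt_of_gt h, tFam, or_comm, ha]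
  have hcard : (univ.filter (fun k : Fin (n+1) => k ≠ i ∧ k ≠ j)).card = n - 1 := by
    have hset : univ.filter (fun k : Fin (n+1) => k ≠ i ∧ k ≠ j)
        = (univ : Finset (Fin (n+1))) \ {i, j} := by
      ext k; simp [not_or]
    rw [hset, Finset.card_sdiff_of_subset (by simp)]
    rw [Finset.card_insert_of_notMem (by simpa using hij'), Finset.card_singleton]
    simp
  rw [ricci]
  by_cases hti : t = i
  · subst hti
    have htj : j ≠ t := fun h => hij' h.symm
    have hsum : ∑ k ∈ univ.filter (fun k : Fin (n+1) => k ≠ t ∧ k ≠ j),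
        (symExt n (tFam n t) t j / (symExt n (tFam n t) t k * symExt n (tFam n t) k j)
          - symExt n (tFam n t) t k / (symExt n (tFam n t) t j * symExt n (tFam n t) k j)
          - symExt n (tFam n t) j k / (symExt n (tFam n t) t j * symExt n (tFam n t) t k))
        = ((n:ℝ) - 1) * (-(1 / a^2)) := by
      rw [Finset.sum_congr rfl (fun k hk => ?_), Finset.sum_const, hcard, nsmul_eq_mul]
      · congr 1
        have : 1 ≤ n := by omega
        push_cast [Nat.cast_sub this]
        ring
      · simp only [Finset.mem_filter] at hk
        rw [hsym t j hij', hsym t k (fun h => hk.2.1 h.symm),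
          hsym k j hk.2.2, hsym j k (fun h => hk.2.2 h.symm)]
        rw [if_pos (Or.inl rfl), if_pos (Or.inl rfl), if_neg (by tauto), if_neg (by tauto)]
        field_simp
        ring
    rw [hsum, hsym t j hij', if_pos (Or.inl rfl), ha]
    field_simp
    ring
  · by_cases htj : t = j
    · subst htj
      have hsum : ∑ k ∈ univ.filter (fun k : Fin (n+1) => k ≠ i ∧ k ≠ t),
          (symExt n (tFam n t) i t / (symExt n (tFam n t) i k * symExt n (tFam n t) k t)
            - symExt n (tFam n t) i k / (symExt n (tFam n t) i t * symExt n (tFam n t) k t)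
            - symExt n (tFam n t) t k / (symExt n (tFam n t) i t * symExt n (tFam n t) i k))
          = ((n:ℝ) - 1) * (-(1 / a^2)) := by
        rw [Finset.sum_congr rfl (fun k hk => ?_), Finset.sum_const, hcard, nsmul_eq_mul]
        · congr 1
          have : 1 ≤ n := by omega
          push_cast [Nat.cast_sub this]
          ring
        · simp only [Finset.mem_filter] at hk
          rw [hsym i t hij', hsym i k (fun h => hk.2.1 h.symm),
            hsym k t hk.2.2, hsym t k (fun h => hk.2.2 h.symm)]
          rw [if_pos (Or.inr rfl), if_pos (Or.inr rfl), if_pos (Or.inl rfl),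
            if_neg (by tauto)]
          field_simp
          ring
      rw [hsum, hsym i t hij', if_pos (Or.inr rfl), ha]
      field_simp
      ring
    · have ht : t ∈ univ.filter (fun k : Fin (n+1) => k ≠ i ∧ k ≠ j) := by
        simp [Ne.symm, fun h : t = i => hti h, fun h : t = j => htj h]
      have hterm : ∀ k ∈ univ.filter (fun k : Fin (n+1) => k ≠ i ∧ k ≠ j),
          (symExt n (tFam n t) i j / (symExt n (tFam n t) i k * symExt n (tFam n t) k j)
            - symExt n (tFam n t) i k / (symExt n (tFam n t) i j * symExt n (tFam n t) k j)
            - symExt n (tFam n t) j k / (symExt n (tFam n t) i j * symExt n (tFam n t) i k))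
          = (-1 : ℝ) + (if k = t then 1 / a^2 - 1 else 0) := by
        intro k hk
        simp only [Finset.mem_filter] at hk
        rw [hsym i j hij', hsym i k (Ne.symm hk.2.1), hsym k j hk.2.2,
          hsym j k (Ne.symm hk.2.2)]
        rw [if_neg (by tauto : ¬(i = t ∨ j = t))]
        by_cases hkt : k = t
        · rw [if_pos hkt, if_pos (Or.inr hkt : i = t ∨ k = t),
            if_pos (Or.inl hkt : k = t ∨ j = t), if_pos (Or.inr hkt : j = t ∨ k = t)]
          field_simp
          ring
        · rw [if_neg hkt, if_neg (by tauto), if_neg (by tauto), if_neg (by tauto)]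
          norm_num
      have hsum : ∑ k ∈ univ.filter (fun k : Fin (n+1) => k ≠ i ∧ k ≠ j),
          (symExt n (tFam n t) i j / (symExt n (tFam n t) i k * symExt n (tFam n t) k j)
            - symExt n (tFam n t) i k / (symExt n (tFam n t) i j * symExt n (tFam n t) k j)
            - symExt n (tFam n t) j k / (symExt n (tFam n t) i j * symExt n (tFam n t) i k))
          = 1 / a^2 - (n:ℝ) := by
        rw [Finset.sum_congr rfl hterm, Finset.sum_add_distrib,
          Finset.sum_ite_eq' _ t (fun _ => (1:ℝ)/a^2 - 1), if_pos ht,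
          Finset.sum_const, hcard, nsmul_eq_mul]
        have h1 : 1 ≤ n := by omega
        push_cast [Nat.cast_sub h1]
        ring
      rw [hsum, hsym i j hij', if_neg (by tauto), ha]
      field_simp
end

section
/- Let n ≥ 2 be an integer, fix t ∈ {1, …, n+1}, and let a > 0 be a positive real. Then the family defined by λ_{ij} = a if t ∈ {i,j} and λ_{ij} = 1 otherwise is an Einstein solution if and only if a = 1 or a = n/(n+2). -/
open Finset

lemma symExt_aFam (n : ℕ) (t : Fin (n + 1)) (a : ℝ) {i j : Fin (n + 1)} (hij : i ≠ j) :
    symExt n (fun p => if p.1.1 = t ∨ p.1.2 = t then a else 1) i j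
      = if i = t ∨ j = t then a else 1 := by
  rcases hij.lt_or_gt with h | h
  · simp [symExt, h]
  · simp only [symExt, dif_neg (asymm h), dif_pos h]
    simp [or_comm]

lemma card_aux (n : ℕ) {i j : Fin (n + 1)} (hij : i ≠ j) :
    (univ.filter (fun k : Fin (n + 1) => k ≠ i ∧ k ≠ j)).card = n - 1 := by
  have h : (univ.filter (fun k : Fin (n + 1) => k ≠ i ∧ k ≠ j))
      = (univ : Finset (Fin (n + 1))) \ {i, j} := by
    ext k; simp [not_or]
  rw [h, card_sdiff_of_subset (by simp), card_univ, Fintype.card_fin, card_pair hij]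
  omega

lemma ricci_off (n : ℕ) (hn : 1 ≤ n) (t : Fin (n + 1)) (a : ℝ) (ha : a ≠ 0)
    {i j : Fin (n + 1)} (hij : i < j) (hi : i ≠ t) (hj : j ≠ t) :
    ricci n (fun p => if p.1.1 = t ∨ p.1.2 = t then a else 1) i j
      = 1 / 2 + (1 / (4 * ((n : ℝ) + 1))) * (1 / a ^ 2 - (n : ℝ)) := by
  unfold ricci
  rw [symExt_aFam n t a hij.ne, if_neg (by simp [hi, hj])]
  have hsum : ∑ k ∈ univ.filter (fun k : Fin (n + 1) => k ≠ i ∧ k ≠ j),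
      ((1 : ℝ) / (symExt n (fun p => if p.1.1 = t ∨ p.1.2 = t then a else 1) i k *
          symExt n (fun p => if p.1.1 = t ∨ p.1.2 = t then a else 1) k j)
        - symExt n (fun p => if p.1.1 = t ∨ p.1.2 = t then a else 1) i k /
            (1 * symExt n (fun p => if p.1.1 = t ∨ p.1.2 = t then a else 1) k j)
        - symExt n (fun p => if p.1.1 = t ∨ p.1.2 = t then a else 1) j k /
            (1 * symExt n (fun p => if p.1.1 = t ∨ p.1.2 = t then a else 1) i k))
      = ∑ k ∈ univ.filter (fun k : Fin (n + 1) => k ≠ i ∧ k ≠ j),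
          ((-1 : ℝ) + if k = t then 1 / a ^ 2 - 1 else 0) := by
    refine Finset.sum_congr rfl fun k hk => ?_
    simp only [mem_filter, mem_univ, true_and] at hk
    rw [symExt_aFam n t a (Ne.symm hk.1), symExt_aFam n t a hk.2,
      symExt_aFam n t a (fun h => hk.2 h.symm)]
    by_cases hkt : k = t
    · rw [if_pos (Or.inr hkt), if_pos (Or.inl hkt), if_pos (Or.inr hkt), if_pos hkt]
      field_simp
      ring
    · rw [if_neg (by simp [hi, hkt]), if_neg (by simp [hj, hkt]),
        if_neg (by simp [hj, hkt]), if_neg hkt]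
      norm_num
  rw [hsum, Finset.sum_add_distrib, Finset.sum_const, Finset.sum_ite_eq' _ t,
    if_pos (by simp [Ne.symm hi, Ne.symm hj]), card_aux n hij.ne, nsmul_eq_mul]
  have hcast : ((n - 1 : ℕ) : ℝ) = (n : ℝ) - 1 := by
    have := Nat.cast_sub hn (R := ℝ); simpa using this
  rw [hcast]
  ring

lemma ricci_on (n : ℕ) (hn : 1 ≤ n) (t : Fin (n + 1)) (a : ℝ) (ha : a ≠ 0)
    {i j : Fin (n + 1)} (hij : i < j) (hijt : i = t ∨ j = t) :
    ricci n (fun p => if p.1.1 = t ∨ p.1.2 = t then a else 1) i j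
      = 1 / (2 * a) + (1 / (4 * ((n : ℝ) + 1))) * (((n : ℝ) - 1) * (-(1 / a ^ 2))) := by
  unfold ricci
  rw [symExt_aFam n t a hij.ne, if_pos hijt]
  have hsum : ∑ k ∈ univ.filter (fun k : Fin (n + 1) => k ≠ i ∧ k ≠ j),
      (a / (symExt n (fun p => if p.1.1 = t ∨ p.1.2 = t then a else 1) i k *
          symExt n (fun p => if p.1.1 = t ∨ p.1.2 = t then a else 1) k j)
        - symExt n (fun p => if p.1.1 = t ∨ p.1.2 = t then a else 1) i k /
            (a * symExt n (fun p => if p.1.1 = t ∨ p.1.2 = t then a else 1) k j)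
        - symExt n (fun p => if p.1.1 = t ∨ p.1.2 = t then a else 1) j k /
            (a * symExt n (fun p => if p.1.1 = t ∨ p.1.2 = t then a else 1) i k))
      = ∑ _k ∈ univ.filter (fun k : Fin (n + 1) => k ≠ i ∧ k ≠ j), (-(1 / a ^ 2)) := by
    refine Finset.sum_congr rfl fun k hk => ?_
    simp only [mem_filter, mem_univ, true_and] at hk
    rw [symExt_aFam n t a (Ne.symm hk.1), symExt_aFam n t a hk.2,
      symExt_aFam n t a (fun h => hk.2 h.symm)]
    rcases hijt with h | h
    · have hjt : j ≠ t := fun hh => hij.ne (h.trans hh.symm)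
      have hkt : k ≠ t := fun hh => hk.1 (hh.trans h.symm)
      rw [if_pos (Or.inl h), if_neg (by simp [hkt, hjt]), if_neg (by simp [hjt, hkt])]
      field_simp
      ring
    · have hit : i ≠ t := fun hh => hij.ne (hh.trans h.symm)
      have hkt : k ≠ t := fun hh => hk.2 (hh.trans h.symm)
      rw [if_neg (by simp [hit, hkt]), if_pos (Or.inr h), if_pos (Or.inl h)]
      field_simp
      ring
  rw [hsum, Finset.sum_const, card_aux n hij.ne, nsmul_eq_mul]
  have hcast : ((n - 1 : ℕ) : ℝ) = (n : ℝ) - 1 := by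
    have := Nat.cast_sub hn (R := ℝ); simpa using this
  rw [hcast]

/-- For `n ≥ 2`, `t ∈ {1, …, n+1}` and `a > 0`, the family
`λ_{ij} = a` if `t ∈ {i,j}` and `λ_{ij} = 1` otherwise is an Einstein solution
iff `a = 1` or `a = n/(n+2)`. -/
theorem aFam_einstein_iff (n : ℕ) (hn : 2 ≤ n) (t : Fin (n + 1)) (a : ℝ) (ha : 0 < a) :
    (∃ k : ℝ, IsEinstein n (fun p => if p.1.1 = t ∨ p.1.2 = t then a else 1) k) ↔
      a = 1 ∨ a = (n : ℝ) / ((n : ℝ) + 2) := by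
  have hn1 : 1 ≤ n := le_trans (by norm_num) hn
  have ha0 : a ≠ 0 := ha.ne'
  have hN1 : (0 : ℝ) < (n : ℝ) + 1 := by positivity
  have hN2 : ((n : ℝ) + 2) ≠ 0 := by positivity
  have hNn : (2 : ℝ) ≤ (n : ℝ) := by exact_mod_cast hn
  -- two distinct elements different from t
  obtain ⟨x, hx, y, hy, hxy⟩ : ∃ x ∈ (univ : Finset (Fin (n + 1))).erase t,
      ∃ y ∈ (univ : Finset (Fin (n + 1))).erase t, x ≠ y := by
    refine Finset.one_lt_card.mp ?_
    rw [card_erase_of_mem (mem_univ t), card_univ, Fintype.card_fin]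
    omega
  have hxt : x ≠ t := (mem_erase.mp hx).1
  have hyt : y ≠ t := (mem_erase.mp hy).1
  constructor
  · rintro ⟨k, hE⟩
    have hoff : 1 / 2 + (1 / (4 * ((n : ℝ) + 1))) * (1 / a ^ 2 - (n : ℝ)) = k := by
      rcases hxy.lt_or_gt with h | h
      · rw [← ricci_off n hn1 t a ha0 h hxt hyt]; exact hE x y h
      · rw [← ricci_off n hn1 t a ha0 h hyt hxt]; exact hE y x h
    have hon : 1 / (2 * a) + (1 / (4 * ((n : ℝ) + 1))) * (((n : ℝ) - 1) * (-(1 / a ^ 2))) = k := by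
      rcases hxt.lt_or_gt with h | h
      · rw [← ricci_on n hn1 t a ha0 h (Or.inr rfl)]; exact hE x t h
      · rw [← ricci_on n hn1 t a ha0 h (Or.inl rfl)]; exact hE t x h
    have heq := hoff.trans hon.symm
    have hkey : (a - 1) * (((n : ℝ) + 2) * a - (n : ℝ)) = 0 := by
      field_simp at heq
      have h2 : (16 * ((n : ℝ) + 1) * a ^ 3) * ((a - 1) * (((n : ℝ) + 2) * a - (n : ℝ))) = 0 := by
        linear_combination (8 * ((n : ℝ) + 1) * a ^ 3) * heq
      rcases mul_eq_zero.mp h2 with h | h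
      · exact absurd h (by positivity)
      · exact h
    rcases mul_eq_zero.mp hkey with h | h
    · left; linarith
    · right
      rw [eq_div_iff hN2]
      linarith
  · intro h
    have heq : 1 / (2 * a) + (1 / (4 * ((n : ℝ) + 1))) * (((n : ℝ) - 1) * (-(1 / a ^ 2)))
        = 1 / 2 + (1 / (4 * ((n : ℝ) + 1))) * (1 / a ^ 2 - (n : ℝ)) := by
      rcases h with h | h
      · subst h; field_simp; ring
      · subst h
        have hn0 : (n : ℝ) ≠ 0 := by positivity
        field_simp
        ring
    refine ⟨1 / 2 + (1 / (4 * ((n : ℝ) + 1))) * (1 / a ^ 2 - (n : ℝ)), ?_⟩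
    intro i j hij
    by_cases hijt : i = t ∨ j = t
    · rw [ricci_on n hn1 t a ha0 hij hijt]; exact heq
    · push_neg at hijt
      exact ricci_off n hn1 t a ha0 hij hijt.1 hijt.2
end

section
/- For every integer n ≥ 1, the set of tuples { (|σ(i) − σ(j)|)_{1 ≤ i < j ≤ n+1} : σ a permutation of {1, …, n+1} } has exactly (n+1)!/2 elements. (This reflects that SU(n+1)/Tⁿ carries (n+1)!/2 invariant Kähler–Einstein metrics, one for each invariant complex structure.) -/
open Finset

lemma dist_eq_of_kahler_eq {n : ℕ} {σ τ : Equiv.Perm (Fin (n+1))}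
    (h : kahlerFam n σ = kahlerFam n τ) (a b : Fin (n+1)) :
    |((σ a : ℕ) : ℤ) - ((σ b : ℕ) : ℤ)| = |((τ a : ℕ) : ℤ) - ((τ b : ℕ) : ℤ)| := by
  rcases lt_trichotomy a b with hab | hab | hab
  · have := congrFun h ⟨(a, b), hab⟩
    simp only [kahlerFam] at this
    exact_mod_cast this
  · subst hab; simp
  · have := congrFun h ⟨(b, a), hab⟩
    simp only [kahlerFam] at this
    rw [abs_sub_comm, abs_sub_comm ((τ a : ℕ) : ℤ)]
    exact_mod_cast this

lemma perm_rigid {n : ℕ} (g : Equiv.Perm (Fin (n+1)))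
    (hg : ∀ a b : Fin (n+1), |((g a : ℕ) : ℤ) - ((g b : ℕ) : ℤ)| = |((a : ℕ) : ℤ) - ((b : ℕ) : ℤ)|) :
    g = 1 ∨ g = Fin.revPerm := by
  have hlast := abs_eq_abs.mp (hg (Fin.last n) 0)
  simp only [Fin.val_last, Fin.val_zero, Nat.cast_zero, sub_zero] at hlast
  have b1 : (g (Fin.last n)).val ≤ n := Fin.is_le _
  have b2 : (g 0).val ≤ n := Fin.is_le _
  rcases hlast with hc | hc
  · -- g 0 = 0, so g = 1
    have h0 : ((g 0 : Fin (n+1)) : ℕ) = 0 := by omega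
    left
    apply Equiv.ext; intro a
    apply Fin.ext
    have ha := abs_eq_abs.mp (hg a 0)
    simp only [Fin.val_zero, Nat.cast_zero, sub_zero, Equiv.Perm.coe_one, id_eq] at ha ⊢
    have := Fin.is_le (g a)
    rcases ha with ha | ha <;> omega
  · -- g 0 = n, so g = rev
    have h0 : ((g 0 : Fin (n+1)) : ℕ) = n := by omega
    right
    apply Equiv.ext; intro a
    apply Fin.ext
    have ha := abs_eq_abs.mp (hg a 0)
    simp only [Fin.val_zero, Nat.cast_zero, sub_zero] at ha
    have := Fin.is_le (g a)
    have hrev : ((Fin.revPerm a : Fin (n+1)) : ℕ) = n + 1 - (a + 1) := Fin.val_rev a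
    rw [hrev]
    have := Fin.is_le a
    rcases ha with ha | ha <;> omega

lemma kahler_rev (n : ℕ) (σ : Equiv.Perm (Fin (n+1))) :
    kahlerFam n (σ.trans Fin.revPerm) = kahlerFam n σ := by
  funext p
  simp only [kahlerFam, Equiv.trans_apply]
  have h1 : ((Fin.revPerm (σ p.1.1) : Fin (n+1)) : ℕ) = n + 1 - ((σ p.1.1 : ℕ) + 1) :=
    Fin.val_rev _
  have h2 : ((Fin.revPerm (σ p.1.2) : Fin (n+1)) : ℕ) = n + 1 - ((σ p.1.2 : ℕ) + 1) :=
    Fin.val_rev _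
  have b1 : (σ p.1.1).val ≤ n := Fin.is_le _
  have b2 : (σ p.1.2).val ≤ n := Fin.is_le _
  rw [h1, h2, abs_sub_comm]
  congr 1
  rw [Nat.cast_sub (by omega), Nat.cast_sub (by omega)]
  push_cast
  ring


/-- For every `n ≥ 1`, the set of Kähler–Einstein tuples
`(|σ(i) − σ(j)|)_{i<j}` for permutations `σ` of `{1, …, n+1}` has exactly
`(n+1)!/2` elements. -/
theorem kahler_count (n : ℕ) (hn : 1 ≤ n) :
    Set.ncard {f : FlagIdx n → ℝ | ∃ σ : Equiv.Perm (Fin (n + 1)), f = kahlerFam n σ} =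
      Nat.factorial (n + 1) / 2 := by
  classical
  have hset : {f : FlagIdx n → ℝ | ∃ σ : Equiv.Perm (Fin (n + 1)), f = kahlerFam n σ}
      = ↑((univ : Finset (Equiv.Perm (Fin (n+1)))).image (kahlerFam n)) := by
    ext f
    simp [eq_comm]
  rw [hset, Set.ncard_coe_finset]
  have hne : ∀ σ : Equiv.Perm (Fin (n+1)), σ ≠ σ.trans Fin.revPerm := by
    intro σ h
    have h2 := congrArg (fun e : Equiv.Perm (Fin (n+1)) => ((e (σ.symm 0) : Fin (n+1)) : ℕ)) h
    simp only [Equiv.trans_apply, Equiv.apply_symm_apply] at h2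
    rw [show ((Fin.revPerm (0 : Fin (n+1)) : Fin (n+1)) : ℕ) = n + 1 - (0 + 1) from Fin.val_rev _] at h2
    simp at h2
    omega
  have hfiber : ∀ σ : Equiv.Perm (Fin (n+1)),
      (univ.filter (fun τ => kahlerFam n τ = kahlerFam n σ))
        = ({σ, σ.trans Fin.revPerm} : Finset (Equiv.Perm (Fin (n+1)))) := by
    intro σ
    ext τ
    simp only [mem_filter, mem_univ, true_and, mem_insert, mem_singleton]
    constructor
    · intro h
      set g : Equiv.Perm (Fin (n+1)) := σ.symm.trans τ with hg
      have hgd : ∀ a b : Fin (n+1),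
          |((g a : ℕ) : ℤ) - ((g b : ℕ) : ℤ)| = |((a : ℕ) : ℤ) - ((b : ℕ) : ℤ)| := by
        intro a b
        have := dist_eq_of_kahler_eq h (σ.symm a) (σ.symm b)
        simpa [hg, Equiv.trans_apply, Equiv.apply_symm_apply] using this
      rcases perm_rigid g hgd with h1 | h1
      · left
        apply Equiv.ext; intro a
        have := congrArg (fun e : Equiv.Perm (Fin (n+1)) => e (σ a)) h1
        simpa [hg, Equiv.trans_apply] using this
      · right
        apply Equiv.ext; intro a
        have := congrArg (fun e : Equiv.Perm (Fin (n+1)) => e (σ a)) h1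
        simpa [hg, Equiv.trans_apply] using this
    · rintro (rfl | rfl)
      · rfl
      · exact kahler_rev n σ
  have hcard := Finset.card_eq_sum_card_image (kahlerFam n) (univ : Finset (Equiv.Perm (Fin (n+1))))
  have hsum : ∀ b ∈ (univ : Finset (Equiv.Perm (Fin (n+1)))).image (kahlerFam n),
      (univ.filter (fun τ => kahlerFam n τ = b)).card = 2 := by
    intro b hb
    obtain ⟨σ, -, rfl⟩ := mem_image.mp hb
    rw [hfiber σ, Finset.card_pair (hne σ)]
  rw [Finset.sum_congr rfl hsum, Finset.sum_const, smul_eq_mul] at hcard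
  have hcf : (univ : Finset (Equiv.Perm (Fin (n+1)))).card = Nat.factorial (n + 1) := by
    rw [Finset.card_univ, Fintype.card_perm, Fintype.card_fin]
  omega
end

section
/- For n = 4 (the full flag manifold SU(5)/T⁴), there exist at least 66 pairwise non-proportional Einstein solutions: the 60 Kähler–Einstein tuples λ_{ij} = |σ(i) − σ(j)| for permutations σ of {1, …, 5}, the 5 tuples λ_{ij} = 2/3 if t ∈ {i,j} and λ_{ij} = 1 otherwise (t ∈ {1, …, 5}), and the constant tuple λ_{ij} = 1. -/
open Finset

set_option linter.unreachableTactic false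
set_option linter.unusedTactic false
set_option linter.unnecessarySeqFocus false
set_option maxHeartbeats 1000000

lemma einstein_kahler_id : IsEinstein 4 (kahlerFam 4 1) ((1/5 : ℝ)) := by
  intro i j hij
  have E01 : symExt 4 (kahlerFam 4 1) 0 1 = (1 : ℝ) := by rw [symExt, dif_pos (by decide : (0:Fin 5) < 1)]; norm_num [kahlerFam, (show ((0:Fin 5):ℕ) = 0 from rfl), (show ((1:Fin 5):ℕ) = 1 from rfl), (show ((2:Fin 5):ℕ) = 2 from rfl), (show ((3:Fin 5):ℕ) = 3 from rfl), (show ((4:Fin 5):ℕ) = 4 from rfl)] <;> decide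
  have E02 : symExt 4 (kahlerFam 4 1) 0 2 = (2 : ℝ) := by rw [symExt, dif_pos (by decide : (0:Fin 5) < 2)]; norm_num [kahlerFam, (show ((0:Fin 5):ℕ) = 0 from rfl), (show ((1:Fin 5):ℕ) = 1 from rfl), (show ((2:Fin 5):ℕ) = 2 from rfl), (show ((3:Fin 5):ℕ) = 3 from rfl), (show ((4:Fin 5):ℕ) = 4 from rfl)] <;> decide
  have E03 : symExt 4 (kahlerFam 4 1) 0 3 = (3 : ℝ) := by rw [symExt, dif_pos (by decide : (0:Fin 5) < 3)]; norm_num [kahlerFam, (show ((0:Fin 5):ℕ) = 0 from rfl), (show ((1:Fin 5):ℕ) = 1 from rfl), (show ((2:Fin 5):ℕ) = 2 from rfl), (show ((3:Fin 5):ℕ) = 3 from rfl), (show ((4:Fin 5):ℕ) = 4 from rfl)] <;> decide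
  have E04 : symExt 4 (kahlerFam 4 1) 0 4 = (4 : ℝ) := by rw [symExt, dif_pos (by decide : (0:Fin 5) < 4)]; norm_num [kahlerFam, (show ((0:Fin 5):ℕ) = 0 from rfl), (show ((1:Fin 5):ℕ) = 1 from rfl), (show ((2:Fin 5):ℕ) = 2 from rfl), (show ((3:Fin 5):ℕ) = 3 from rfl), (show ((4:Fin 5):ℕ) = 4 from rfl)] <;> decide
  have E10 : symExt 4 (kahlerFam 4 1) 1 0 = (1 : ℝ) := by rw [symExt, dif_neg (by decide : ¬ (1:Fin 5) < 0), dif_pos (by decide : (0:Fin 5) < 1)]; norm_num [kahlerFam, (show ((0:Fin 5):ℕ) = 0 from rfl), (show ((1:Fin 5):ℕ) = 1 from rfl), (show ((2:Fin 5):ℕ) = 2 from rfl), (show ((3:Fin 5):ℕ) = 3 from rfl), (show ((4:Fin 5):ℕ) = 4 from rfl)] <;> decide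
  have E12 : symExt 4 (kahlerFam 4 1) 1 2 = (1 : ℝ) := by rw [symExt, dif_pos (by decide : (1:Fin 5) < 2)]; norm_num [kahlerFam, (show ((0:Fin 5):ℕ) = 0 from rfl), (show ((1:Fin 5):ℕ) = 1 from rfl), (show ((2:Fin 5):ℕ) = 2 from rfl), (show ((3:Fin 5):ℕ) = 3 from rfl), (show ((4:Fin 5):ℕ) = 4 from rfl)] <;> decide
  have E13 : symExt 4 (kahlerFam 4 1) 1 3 = (2 : ℝ) := by rw [symExt, dif_pos (by decide : (1:Fin 5) < 3)]; norm_num [kahlerFam, (show ((0:Fin 5):ℕ) = 0 from rfl), (show ((1:Fin 5):ℕ) = 1 from rfl), (show ((2:Fin 5):ℕ) = 2 from rfl), (show ((3:Fin 5):ℕ) = 3 from rfl), (show ((4:Fin 5):ℕ) = 4 from rfl)] <;> decide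
  have E14 : symExt 4 (kahlerFam 4 1) 1 4 = (3 : ℝ) := by rw [symExt, dif_pos (by decide : (1:Fin 5) < 4)]; norm_num [kahlerFam, (show ((0:Fin 5):ℕ) = 0 from rfl), (show ((1:Fin 5):ℕ) = 1 from rfl), (show ((2:Fin 5):ℕ) = 2 from rfl), (show ((3:Fin 5):ℕ) = 3 from rfl), (show ((4:Fin 5):ℕ) = 4 from rfl)] <;> decide
  have E20 : symExt 4 (kahlerFam 4 1) 2 0 = (2 : ℝ) := by rw [symExt, dif_neg (by decide : ¬ (2:Fin 5) < 0), dif_pos (by decide : (0:Fin 5) < 2)]; norm_num [kahlerFam, (show ((0:Fin 5):ℕ) = 0 from rfl), (show ((1:Fin 5):ℕ) = 1 from rfl), (show ((2:Fin 5):ℕ) = 2 from rfl), (show ((3:Fin 5):ℕ) = 3 from rfl), (show ((4:Fin 5):ℕ) = 4 from rfl)] <;> decide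
  have E21 : symExt 4 (kahlerFam 4 1) 2 1 = (1 : ℝ) := by rw [symExt, dif_neg (by decide : ¬ (2:Fin 5) < 1), dif_pos (by decide : (1:Fin 5) < 2)]; norm_num [kahlerFam, (show ((0:Fin 5):ℕ) = 0 from rfl), (show ((1:Fin 5):ℕ) = 1 from rfl), (show ((2:Fin 5):ℕ) = 2 from rfl), (show ((3:Fin 5):ℕ) = 3 from rfl), (show ((4:Fin 5):ℕ) = 4 from rfl)] <;> decide
  have E23 : symExt 4 (kahlerFam 4 1) 2 3 = (1 : ℝ) := by rw [symExt, dif_pos (by decide : (2:Fin 5) < 3)]; norm_num [kahlerFam, (show ((0:Fin 5):ℕ) = 0 from rfl), (show ((1:Fin 5):ℕ) = 1 from rfl), (show ((2:Fin 5):ℕ) = 2 from rfl), (show ((3:Fin 5):ℕ) = 3 from rfl), (show ((4:Fin 5):ℕ) = 4 from rfl)] <;> decide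
  have E24 : symExt 4 (kahlerFam 4 1) 2 4 = (2 : ℝ) := by rw [symExt, dif_pos (by decide : (2:Fin 5) < 4)]; norm_num [kahlerFam, (show ((0:Fin 5):ℕ) = 0 from rfl), (show ((1:Fin 5):ℕ) = 1 from rfl), (show ((2:Fin 5):ℕ) = 2 from rfl), (show ((3:Fin 5):ℕ) = 3 from rfl), (show ((4:Fin 5):ℕ) = 4 from rfl)] <;> decide
  have E30 : symExt 4 (kahlerFam 4 1) 3 0 = (3 : ℝ) := by rw [symExt, dif_neg (by decide : ¬ (3:Fin 5) < 0), dif_pos (by decide : (0:Fin 5) < 3)]; norm_num [kahlerFam, (show ((0:Fin 5):ℕ) = 0 from rfl), (show ((1:Fin 5):ℕ) = 1 from rfl), (show ((2:Fin 5):ℕ) = 2 from rfl), (show ((3:Fin 5):ℕ) = 3 from rfl), (show ((4:Fin 5):ℕ) = 4 from rfl)] <;> decide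
  have E31 : symExt 4 (kahlerFam 4 1) 3 1 = (2 : ℝ) := by rw [symExt, dif_neg (by decide : ¬ (3:Fin 5) < 1), dif_pos (by decide : (1:Fin 5) < 3)]; norm_num [kahlerFam, (show ((0:Fin 5):ℕ) = 0 from rfl), (show ((1:Fin 5):ℕ) = 1 from rfl), (show ((2:Fin 5):ℕ) = 2 from rfl), (show ((3:Fin 5):ℕ) = 3 from rfl), (show ((4:Fin 5):ℕ) = 4 from rfl)] <;> decide
  have E32 : symExt 4 (kahlerFam 4 1) 3 2 = (1 : ℝ) := by rw [symExt, dif_neg (by decide : ¬ (3:Fin 5) < 2), dif_pos (by decide : (2:Fin 5) < 3)]; norm_num [kahlerFam, (show ((0:Fin 5):ℕ) = 0 from rfl), (show ((1:Fin 5):ℕ) = 1 from rfl), (show ((2:Fin 5):ℕ) = 2 from rfl), (show ((3:Fin 5):ℕ) = 3 from rfl), (show ((4:Fin 5):ℕ) = 4 from rfl)] <;> decide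
  have E34 : symExt 4 (kahlerFam 4 1) 3 4 = (1 : ℝ) := by rw [symExt, dif_pos (by decide : (3:Fin 5) < 4)]; norm_num [kahlerFam, (show ((0:Fin 5):ℕ) = 0 from rfl), (show ((1:Fin 5):ℕ) = 1 from rfl), (show ((2:Fin 5):ℕ) = 2 from rfl), (show ((3:Fin 5):ℕ) = 3 from rfl), (show ((4:Fin 5):ℕ) = 4 from rfl)] <;> decide
  have E40 : symExt 4 (kahlerFam 4 1) 4 0 = (4 : ℝ) := by rw [symExt, dif_neg (by decide : ¬ (4:Fin 5) < 0), dif_pos (by decide : (0:Fin 5) < 4)]; norm_num [kahlerFam, (show ((0:Fin 5):ℕ) = 0 from rfl), (show ((1:Fin 5):ℕ) = 1 from rfl), (show ((2:Fin 5):ℕ) = 2 from rfl), (show ((3:Fin 5):ℕ) = 3 from rfl), (show ((4:Fin 5):ℕ) = 4 from rfl)] <;> decide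
  have E41 : symExt 4 (kahlerFam 4 1) 4 1 = (3 : ℝ) := by rw [symExt, dif_neg (by decide : ¬ (4:Fin 5) < 1), dif_pos (by decide : (1:Fin 5) < 4)]; norm_num [kahlerFam, (show ((0:Fin 5):ℕ) = 0 from rfl), (show ((1:Fin 5):ℕ) = 1 from rfl), (show ((2:Fin 5):ℕ) = 2 from rfl), (show ((3:Fin 5):ℕ) = 3 from rfl), (show ((4:Fin 5):ℕ) = 4 from rfl)] <;> decide
  have E42 : symExt 4 (kahlerFam 4 1) 4 2 = (2 : ℝ) := by rw [symExt, dif_neg (by decide : ¬ (4:Fin 5) < 2), dif_pos (by decide : (2:Fin 5) < 4)]; norm_num [kahlerFam, (show ((0:Fin 5):ℕ) = 0 from rfl), (show ((1:Fin 5):ℕ) = 1 from rfl), (show ((2:Fin 5):ℕ) = 2 from rfl), (show ((3:Fin 5):ℕ) = 3 from rfl), (show ((4:Fin 5):ℕ) = 4 from rfl)] <;> decide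
  have E43 : symExt 4 (kahlerFam 4 1) 4 3 = (1 : ℝ) := by rw [symExt, dif_neg (by decide : ¬ (4:Fin 5) < 3), dif_pos (by decide : (3:Fin 5) < 4)]; norm_num [kahlerFam, (show ((0:Fin 5):ℕ) = 0 from rfl), (show ((1:Fin 5):ℕ) = 1 from rfl), (show ((2:Fin 5):ℕ) = 2 from rfl), (show ((3:Fin 5):ℕ) = 3 from rfl), (show ((4:Fin 5):ℕ) = 4 from rfl)] <;> decide
  fin_cases i <;> fin_cases j <;> first
  | exact absurd hij (by decide)
  | exact (by
      rw [ricci, show (univ.filter fun k : Fin 5 => k ≠ (0:Fin 5) ∧ k ≠ (1:Fin 5)) = {2,3,4} from by decide,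
        Finset.sum_insert (by decide), Finset.sum_insert (by decide), Finset.sum_singleton]
      norm_num [E01, E02, E03, E04, E10, E12, E13, E14, E20, E21, E23, E24, E30, E31, E32, E34, E40, E41, E42, E43] : ricci 4 (kahlerFam 4 1) 0 1 = (1/5 : ℝ))
  | exact (by
      rw [ricci, show (univ.filter fun k : Fin 5 => k ≠ (0:Fin 5) ∧ k ≠ (2:Fin 5)) = {1,3,4} from by decide,
        Finset.sum_insert (by decide), Finset.sum_insert (by decide), Finset.sum_singleton]
      norm_num [E01, E02, E03, E04, E10, E12, E13, E14, E20, E21, E23, E24, E30, E31, E32, E34, E40, E41, E42, E43] : ricci 4 (kahlerFam 4 1) 0 2 = (1/5 : ℝ))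
  | exact (by
      rw [ricci, show (univ.filter fun k : Fin 5 => k ≠ (0:Fin 5) ∧ k ≠ (3:Fin 5)) = {1,2,4} from by decide,
        Finset.sum_insert (by decide), Finset.sum_insert (by decide), Finset.sum_singleton]
      norm_num [E01, E02, E03, E04, E10, E12, E13, E14, E20, E21, E23, E24, E30, E31, E32, E34, E40, E41, E42, E43] : ricci 4 (kahlerFam 4 1) 0 3 = (1/5 : ℝ))
  | exact (by
      rw [ricci, show (univ.filter fun k : Fin 5 => k ≠ (0:Fin 5) ∧ k ≠ (4:Fin 5)) = {1,2,3} from by decide,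
        Finset.sum_insert (by decide), Finset.sum_insert (by decide), Finset.sum_singleton]
      norm_num [E01, E02, E03, E04, E10, E12, E13, E14, E20, E21, E23, E24, E30, E31, E32, E34, E40, E41, E42, E43] : ricci 4 (kahlerFam 4 1) 0 4 = (1/5 : ℝ))
  | exact (by
      rw [ricci, show (univ.filter fun k : Fin 5 => k ≠ (1:Fin 5) ∧ k ≠ (2:Fin 5)) = {0,3,4} from by decide,
        Finset.sum_insert (by decide), Finset.sum_insert (by decide), Finset.sum_singleton]
      norm_num [E01, E02, E03, E04, E10, E12, E13, E14, E20, E21, E23, E24, E30, E31, E32, E34, E40, E41, E42, E43] : ricci 4 (kahlerFam 4 1) 1 2 = (1/5 : ℝ))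
  | exact (by
      rw [ricci, show (univ.filter fun k : Fin 5 => k ≠ (1:Fin 5) ∧ k ≠ (3:Fin 5)) = {0,2,4} from by decide,
        Finset.sum_insert (by decide), Finset.sum_insert (by decide), Finset.sum_singleton]
      norm_num [E01, E02, E03, E04, E10, E12, E13, E14, E20, E21, E23, E24, E30, E31, E32, E34, E40, E41, E42, E43] : ricci 4 (kahlerFam 4 1) 1 3 = (1/5 : ℝ))
  | exact (by
      rw [ricci, show (univ.filter fun k : Fin 5 => k ≠ (1:Fin 5) ∧ k ≠ (4:Fin 5)) = {0,2,3} from by decide,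
        Finset.sum_insert (by decide), Finset.sum_insert (by decide), Finset.sum_singleton]
      norm_num [E01, E02, E03, E04, E10, E12, E13, E14, E20, E21, E23, E24, E30, E31, E32, E34, E40, E41, E42, E43] : ricci 4 (kahlerFam 4 1) 1 4 = (1/5 : ℝ))
  | exact (by
      rw [ricci, show (univ.filter fun k : Fin 5 => k ≠ (2:Fin 5) ∧ k ≠ (3:Fin 5)) = {0,1,4} from by decide,
        Finset.sum_insert (by decide), Finset.sum_insert (by decide), Finset.sum_singleton]
      norm_num [E01, E02, E03, E04, E10, E12, E13, E14, E20, E21, E23, E24, E30, E31, E32, E34, E40, E41, E42, E43] : ricci 4 (kahlerFam 4 1) 2 3 = (1/5 : ℝ))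
  | exact (by
      rw [ricci, show (univ.filter fun k : Fin 5 => k ≠ (2:Fin 5) ∧ k ≠ (4:Fin 5)) = {0,1,3} from by decide,
        Finset.sum_insert (by decide), Finset.sum_insert (by decide), Finset.sum_singleton]
      norm_num [E01, E02, E03, E04, E10, E12, E13, E14, E20, E21, E23, E24, E30, E31, E32, E34, E40, E41, E42, E43] : ricci 4 (kahlerFam 4 1) 2 4 = (1/5 : ℝ))
  | exact (by
      rw [ricci, show (univ.filter fun k : Fin 5 => k ≠ (3:Fin 5) ∧ k ≠ (4:Fin 5)) = {0,1,2} from by decide,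
        Finset.sum_insert (by decide), Finset.sum_insert (by decide), Finset.sum_singleton]
      norm_num [E01, E02, E03, E04, E10, E12, E13, E14, E20, E21, E23, E24, E30, E31, E32, E34, E40, E41, E42, E43] : ricci 4 (kahlerFam 4 1) 3 4 = (1/5 : ℝ))

lemma einstein_tfam0 : IsEinstein 4 (tFam 4 0) ((33/80 : ℝ)) := by
  intro i j hij
  have E01 : symExt 4 (tFam 4 0) 0 1 = (2/3 : ℝ) := by rw [symExt, dif_pos (by decide : (0:Fin 5) < 1)]; norm_num [tFam] <;> decide
  have E02 : symExt 4 (tFam 4 0) 0 2 = (2/3 : ℝ) := by rw [symExt, dif_pos (by decide : (0:Fin 5) < 2)]; norm_num [tFam] <;> decide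
  have E03 : symExt 4 (tFam 4 0) 0 3 = (2/3 : ℝ) := by rw [symExt, dif_pos (by decide : (0:Fin 5) < 3)]; norm_num [tFam] <;> decide
  have E04 : symExt 4 (tFam 4 0) 0 4 = (2/3 : ℝ) := by rw [symExt, dif_pos (by decide : (0:Fin 5) < 4)]; norm_num [tFam] <;> decide
  have E10 : symExt 4 (tFam 4 0) 1 0 = (2/3 : ℝ) := by rw [symExt, dif_neg (by decide : ¬ (1:Fin 5) < 0), dif_pos (by decide : (0:Fin 5) < 1)]; norm_num [tFam] <;> decide
  have E12 : symExt 4 (tFam 4 0) 1 2 = (1 : ℝ) := by rw [symExt, dif_pos (by decide : (1:Fin 5) < 2)]; norm_num [tFam] <;> decide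
  have E13 : symExt 4 (tFam 4 0) 1 3 = (1 : ℝ) := by rw [symExt, dif_pos (by decide : (1:Fin 5) < 3)]; norm_num [tFam] <;> decide
  have E14 : symExt 4 (tFam 4 0) 1 4 = (1 : ℝ) := by rw [symExt, dif_pos (by decide : (1:Fin 5) < 4)]; norm_num [tFam] <;> decide
  have E20 : symExt 4 (tFam 4 0) 2 0 = (2/3 : ℝ) := by rw [symExt, dif_neg (by decide : ¬ (2:Fin 5) < 0), dif_pos (by decide : (0:Fin 5) < 2)]; norm_num [tFam] <;> decide
  have E21 : symExt 4 (tFam 4 0) 2 1 = (1 : ℝ) := by rw [symExt, dif_neg (by decide : ¬ (2:Fin 5) < 1), dif_pos (by decide : (1:Fin 5) < 2)]; norm_num [tFam] <;> decide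
  have E23 : symExt 4 (tFam 4 0) 2 3 = (1 : ℝ) := by rw [symExt, dif_pos (by decide : (2:Fin 5) < 3)]; norm_num [tFam] <;> decide
  have E24 : symExt 4 (tFam 4 0) 2 4 = (1 : ℝ) := by rw [symExt, dif_pos (by decide : (2:Fin 5) < 4)]; norm_num [tFam] <;> decide
  have E30 : symExt 4 (tFam 4 0) 3 0 = (2/3 : ℝ) := by rw [symExt, dif_neg (by decide : ¬ (3:Fin 5) < 0), dif_pos (by decide : (0:Fin 5) < 3)]; norm_num [tFam] <;> decide
  have E31 : symExt 4 (tFam 4 0) 3 1 = (1 : ℝ) := by rw [symExt, dif_neg (by decide : ¬ (3:Fin 5) < 1), dif_pos (by decide : (1:Fin 5) < 3)]; norm_num [tFam] <;> decide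
  have E32 : symExt 4 (tFam 4 0) 3 2 = (1 : ℝ) := by rw [symExt, dif_neg (by decide : ¬ (3:Fin 5) < 2), dif_pos (by decide : (2:Fin 5) < 3)]; norm_num [tFam] <;> decide
  have E34 : symExt 4 (tFam 4 0) 3 4 = (1 : ℝ) := by rw [symExt, dif_pos (by decide : (3:Fin 5) < 4)]; norm_num [tFam] <;> decide
  have E40 : symExt 4 (tFam 4 0) 4 0 = (2/3 : ℝ) := by rw [symExt, dif_neg (by decide : ¬ (4:Fin 5) < 0), dif_pos (by decide : (0:Fin 5) < 4)]; norm_num [tFam] <;> decide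
  have E41 : symExt 4 (tFam 4 0) 4 1 = (1 : ℝ) := by rw [symExt, dif_neg (by decide : ¬ (4:Fin 5) < 1), dif_pos (by decide : (1:Fin 5) < 4)]; norm_num [tFam] <;> decide
  have E42 : symExt 4 (tFam 4 0) 4 2 = (1 : ℝ) := by rw [symExt, dif_neg (by decide : ¬ (4:Fin 5) < 2), dif_pos (by decide : (2:Fin 5) < 4)]; norm_num [tFam] <;> decide
  have E43 : symExt 4 (tFam 4 0) 4 3 = (1 : ℝ) := by rw [symExt, dif_neg (by decide : ¬ (4:Fin 5) < 3), dif_pos (by decide : (3:Fin 5) < 4)]; norm_num [tFam] <;> decide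
  fin_cases i <;> fin_cases j <;> first
  | exact absurd hij (by decide)
  | exact (by
      rw [ricci, show (univ.filter fun k : Fin 5 => k ≠ (0:Fin 5) ∧ k ≠ (1:Fin 5)) = {2,3,4} from by decide,
        Finset.sum_insert (by decide), Finset.sum_insert (by decide), Finset.sum_singleton]
      norm_num [E01, E02, E03, E04, E10, E12, E13, E14, E20, E21, E23, E24, E30, E31, E32, E34, E40, E41, E42, E43] : ricci 4 (tFam 4 0) 0 1 = (33/80 : ℝ))
  | exact (by
      rw [ricci, show (univ.filter fun k : Fin 5 => k ≠ (0:Fin 5) ∧ k ≠ (2:Fin 5)) = {1,3,4} from by decide,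
        Finset.sum_insert (by decide), Finset.sum_insert (by decide), Finset.sum_singleton]
      norm_num [E01, E02, E03, E04, E10, E12, E13, E14, E20, E21, E23, E24, E30, E31, E32, E34, E40, E41, E42, E43] : ricci 4 (tFam 4 0) 0 2 = (33/80 : ℝ))
  | exact (by
      rw [ricci, show (univ.filter fun k : Fin 5 => k ≠ (0:Fin 5) ∧ k ≠ (3:Fin 5)) = {1,2,4} from by decide,
        Finset.sum_insert (by decide), Finset.sum_insert (by decide), Finset.sum_singleton]
      norm_num [E01, E02, E03, E04, E10, E12, E13, E14, E20, E21, E23, E24, E30, E31, E32, E34, E40, E41, E42, E43] : ricci 4 (tFam 4 0) 0 3 = (33/80 : ℝ))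
  | exact (by
      rw [ricci, show (univ.filter fun k : Fin 5 => k ≠ (0:Fin 5) ∧ k ≠ (4:Fin 5)) = {1,2,3} from by decide,
        Finset.sum_insert (by decide), Finset.sum_insert (by decide), Finset.sum_singleton]
      norm_num [E01, E02, E03, E04, E10, E12, E13, E14, E20, E21, E23, E24, E30, E31, E32, E34, E40, E41, E42, E43] : ricci 4 (tFam 4 0) 0 4 = (33/80 : ℝ))
  | exact (by
      rw [ricci, show (univ.filter fun k : Fin 5 => k ≠ (1:Fin 5) ∧ k ≠ (2:Fin 5)) = {0,3,4} from by decide,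
        Finset.sum_insert (by decide), Finset.sum_insert (by decide), Finset.sum_singleton]
      norm_num [E01, E02, E03, E04, E10, E12, E13, E14, E20, E21, E23, E24, E30, E31, E32, E34, E40, E41, E42, E43] : ricci 4 (tFam 4 0) 1 2 = (33/80 : ℝ))
  | exact (by
      rw [ricci, show (univ.filter fun k : Fin 5 => k ≠ (1:Fin 5) ∧ k ≠ (3:Fin 5)) = {0,2,4} from by decide,
        Finset.sum_insert (by decide), Finset.sum_insert (by decide), Finset.sum_singleton]
      norm_num [E01, E02, E03, E04, E10, E12, E13, E14, E20, E21, E23, E24, E30, E31, E32, E34, E40, E41, E42, E43] : ricci 4 (tFam 4 0) 1 3 = (33/80 : ℝ))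
  | exact (by
      rw [ricci, show (univ.filter fun k : Fin 5 => k ≠ (1:Fin 5) ∧ k ≠ (4:Fin 5)) = {0,2,3} from by decide,
        Finset.sum_insert (by decide), Finset.sum_insert (by decide), Finset.sum_singleton]
      norm_num [E01, E02, E03, E04, E10, E12, E13, E14, E20, E21, E23, E24, E30, E31, E32, E34, E40, E41, E42, E43] : ricci 4 (tFam 4 0) 1 4 = (33/80 : ℝ))
  | exact (by
      rw [ricci, show (univ.filter fun k : Fin 5 => k ≠ (2:Fin 5) ∧ k ≠ (3:Fin 5)) = {0,1,4} from by decide,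
        Finset.sum_insert (by decide), Finset.sum_insert (by decide), Finset.sum_singleton]
      norm_num [E01, E02, E03, E04, E10, E12, E13, E14, E20, E21, E23, E24, E30, E31, E32, E34, E40, E41, E42, E43] : ricci 4 (tFam 4 0) 2 3 = (33/80 : ℝ))
  | exact (by
      rw [ricci, show (univ.filter fun k : Fin 5 => k ≠ (2:Fin 5) ∧ k ≠ (4:Fin 5)) = {0,1,3} from by decide,
        Finset.sum_insert (by decide), Finset.sum_insert (by decide), Finset.sum_singleton]
      norm_num [E01, E02, E03, E04, E10, E12, E13, E14, E20, E21, E23, E24, E30, E31, E32, E34, E40, E41, E42, E43] : ricci 4 (tFam 4 0) 2 4 = (33/80 : ℝ))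
  | exact (by
      rw [ricci, show (univ.filter fun k : Fin 5 => k ≠ (3:Fin 5) ∧ k ≠ (4:Fin 5)) = {0,1,2} from by decide,
        Finset.sum_insert (by decide), Finset.sum_insert (by decide), Finset.sum_singleton]
      norm_num [E01, E02, E03, E04, E10, E12, E13, E14, E20, E21, E23, E24, E30, E31, E32, E34, E40, E41, E42, E43] : ricci 4 (tFam 4 0) 3 4 = (33/80 : ℝ))

lemma einstein_one : IsEinstein 4 ((fun _ => (1:ℝ) : FlagIdx 4 → ℝ)) ((7/20 : ℝ)) := by
  intro i j hij
  have E01 : symExt 4 ((fun _ => (1:ℝ) : FlagIdx 4 → ℝ)) 0 1 = (1 : ℝ) := by rw [symExt, dif_pos (by decide : (0:Fin 5) < 1)]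
  have E02 : symExt 4 ((fun _ => (1:ℝ) : FlagIdx 4 → ℝ)) 0 2 = (1 : ℝ) := by rw [symExt, dif_pos (by decide : (0:Fin 5) < 2)]
  have E03 : symExt 4 ((fun _ => (1:ℝ) : FlagIdx 4 → ℝ)) 0 3 = (1 : ℝ) := by rw [symExt, dif_pos (by decide : (0:Fin 5) < 3)]
  have E04 : symExt 4 ((fun _ => (1:ℝ) : FlagIdx 4 → ℝ)) 0 4 = (1 : ℝ) := by rw [symExt, dif_pos (by decide : (0:Fin 5) < 4)]
  have E10 : symExt 4 ((fun _ => (1:ℝ) : FlagIdx 4 → ℝ)) 1 0 = (1 : ℝ) := by rw [symExt, dif_neg (by decide : ¬ (1:Fin 5) < 0), dif_pos (by decide : (0:Fin 5) < 1)]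
  have E12 : symExt 4 ((fun _ => (1:ℝ) : FlagIdx 4 → ℝ)) 1 2 = (1 : ℝ) := by rw [symExt, dif_pos (by decide : (1:Fin 5) < 2)]
  have E13 : symExt 4 ((fun _ => (1:ℝ) : FlagIdx 4 → ℝ)) 1 3 = (1 : ℝ) := by rw [symExt, dif_pos (by decide : (1:Fin 5) < 3)]
  have E14 : symExt 4 ((fun _ => (1:ℝ) : FlagIdx 4 → ℝ)) 1 4 = (1 : ℝ) := by rw [symExt, dif_pos (by decide : (1:Fin 5) < 4)]
  have E20 : symExt 4 ((fun _ => (1:ℝ) : FlagIdx 4 → ℝ)) 2 0 = (1 : ℝ) := by rw [symExt, dif_neg (by decide : ¬ (2:Fin 5) < 0), dif_pos (by decide : (0:Fin 5) < 2)]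
  have E21 : symExt 4 ((fun _ => (1:ℝ) : FlagIdx 4 → ℝ)) 2 1 = (1 : ℝ) := by rw [symExt, dif_neg (by decide : ¬ (2:Fin 5) < 1), dif_pos (by decide : (1:Fin 5) < 2)]
  have E23 : symExt 4 ((fun _ => (1:ℝ) : FlagIdx 4 → ℝ)) 2 3 = (1 : ℝ) := by rw [symExt, dif_pos (by decide : (2:Fin 5) < 3)]
  have E24 : symExt 4 ((fun _ => (1:ℝ) : FlagIdx 4 → ℝ)) 2 4 = (1 : ℝ) := by rw [symExt, dif_pos (by decide : (2:Fin 5) < 4)]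
  have E30 : symExt 4 ((fun _ => (1:ℝ) : FlagIdx 4 → ℝ)) 3 0 = (1 : ℝ) := by rw [symExt, dif_neg (by decide : ¬ (3:Fin 5) < 0), dif_pos (by decide : (0:Fin 5) < 3)]
  have E31 : symExt 4 ((fun _ => (1:ℝ) : FlagIdx 4 → ℝ)) 3 1 = (1 : ℝ) := by rw [symExt, dif_neg (by decide : ¬ (3:Fin 5) < 1), dif_pos (by decide : (1:Fin 5) < 3)]
  have E32 : symExt 4 ((fun _ => (1:ℝ) : FlagIdx 4 → ℝ)) 3 2 = (1 : ℝ) := by rw [symExt, dif_neg (by decide : ¬ (3:Fin 5) < 2), dif_pos (by decide : (2:Fin 5) < 3)]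
  have E34 : symExt 4 ((fun _ => (1:ℝ) : FlagIdx 4 → ℝ)) 3 4 = (1 : ℝ) := by rw [symExt, dif_pos (by decide : (3:Fin 5) < 4)]
  have E40 : symExt 4 ((fun _ => (1:ℝ) : FlagIdx 4 → ℝ)) 4 0 = (1 : ℝ) := by rw [symExt, dif_neg (by decide : ¬ (4:Fin 5) < 0), dif_pos (by decide : (0:Fin 5) < 4)]
  have E41 : symExt 4 ((fun _ => (1:ℝ) : FlagIdx 4 → ℝ)) 4 1 = (1 : ℝ) := by rw [symExt, dif_neg (by decide : ¬ (4:Fin 5) < 1), dif_pos (by decide : (1:Fin 5) < 4)]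
  have E42 : symExt 4 ((fun _ => (1:ℝ) : FlagIdx 4 → ℝ)) 4 2 = (1 : ℝ) := by rw [symExt, dif_neg (by decide : ¬ (4:Fin 5) < 2), dif_pos (by decide : (2:Fin 5) < 4)]
  have E43 : symExt 4 ((fun _ => (1:ℝ) : FlagIdx 4 → ℝ)) 4 3 = (1 : ℝ) := by rw [symExt, dif_neg (by decide : ¬ (4:Fin 5) < 3), dif_pos (by decide : (3:Fin 5) < 4)]
  fin_cases i <;> fin_cases j <;> first
  | exact absurd hij (by decide)
  | exact (by
      rw [ricci, show (univ.filter fun k : Fin 5 => k ≠ (0:Fin 5) ∧ k ≠ (1:Fin 5)) = {2,3,4} from by decide,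
        Finset.sum_insert (by decide), Finset.sum_insert (by decide), Finset.sum_singleton]
      norm_num [E01, E02, E03, E04, E10, E12, E13, E14, E20, E21, E23, E24, E30, E31, E32, E34, E40, E41, E42, E43] : ricci 4 ((fun _ => (1:ℝ) : FlagIdx 4 → ℝ)) 0 1 = (7/20 : ℝ))
  | exact (by
      rw [ricci, show (univ.filter fun k : Fin 5 => k ≠ (0:Fin 5) ∧ k ≠ (2:Fin 5)) = {1,3,4} from by decide,
        Finset.sum_insert (by decide), Finset.sum_insert (by decide), Finset.sum_singleton]
      norm_num [E01, E02, E03, E04, E10, E12, E13, E14, E20, E21, E23, E24, E30, E31, E32, E34, E40, E41, E42, E43] : ricci 4 ((fun _ => (1:ℝ) : FlagIdx 4 → ℝ)) 0 2 = (7/20 : ℝ))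
  | exact (by
      rw [ricci, show (univ.filter fun k : Fin 5 => k ≠ (0:Fin 5) ∧ k ≠ (3:Fin 5)) = {1,2,4} from by decide,
        Finset.sum_insert (by decide), Finset.sum_insert (by decide), Finset.sum_singleton]
      norm_num [E01, E02, E03, E04, E10, E12, E13, E14, E20, E21, E23, E24, E30, E31, E32, E34, E40, E41, E42, E43] : ricci 4 ((fun _ => (1:ℝ) : FlagIdx 4 → ℝ)) 0 3 = (7/20 : ℝ))
  | exact (by
      rw [ricci, show (univ.filter fun k : Fin 5 => k ≠ (0:Fin 5) ∧ k ≠ (4:Fin 5)) = {1,2,3} from by decide,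
        Finset.sum_insert (by decide), Finset.sum_insert (by decide), Finset.sum_singleton]
      norm_num [E01, E02, E03, E04, E10, E12, E13, E14, E20, E21, E23, E24, E30, E31, E32, E34, E40, E41, E42, E43] : ricci 4 ((fun _ => (1:ℝ) : FlagIdx 4 → ℝ)) 0 4 = (7/20 : ℝ))
  | exact (by
      rw [ricci, show (univ.filter fun k : Fin 5 => k ≠ (1:Fin 5) ∧ k ≠ (2:Fin 5)) = {0,3,4} from by decide,
        Finset.sum_insert (by decide), Finset.sum_insert (by decide), Finset.sum_singleton]
      norm_num [E01, E02, E03, E04, E10, E12, E13, E14, E20, E21, E23, E24, E30, E31, E32, E34, E40, E41, E42, E43] : ricci 4 ((fun _ => (1:ℝ) : FlagIdx 4 → ℝ)) 1 2 = (7/20 : ℝ))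
  | exact (by
      rw [ricci, show (univ.filter fun k : Fin 5 => k ≠ (1:Fin 5) ∧ k ≠ (3:Fin 5)) = {0,2,4} from by decide,
        Finset.sum_insert (by decide), Finset.sum_insert (by decide), Finset.sum_singleton]
      norm_num [E01, E02, E03, E04, E10, E12, E13, E14, E20, E21, E23, E24, E30, E31, E32, E34, E40, E41, E42, E43] : ricci 4 ((fun _ => (1:ℝ) : FlagIdx 4 → ℝ)) 1 3 = (7/20 : ℝ))
  | exact (by
      rw [ricci, show (univ.filter fun k : Fin 5 => k ≠ (1:Fin 5) ∧ k ≠ (4:Fin 5)) = {0,2,3} from by decide,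
        Finset.sum_insert (by decide), Finset.sum_insert (by decide), Finset.sum_singleton]
      norm_num [E01, E02, E03, E04, E10, E12, E13, E14, E20, E21, E23, E24, E30, E31, E32, E34, E40, E41, E42, E43] : ricci 4 ((fun _ => (1:ℝ) : FlagIdx 4 → ℝ)) 1 4 = (7/20 : ℝ))
  | exact (by
      rw [ricci, show (univ.filter fun k : Fin 5 => k ≠ (2:Fin 5) ∧ k ≠ (3:Fin 5)) = {0,1,4} from by decide,
        Finset.sum_insert (by decide), Finset.sum_insert (by decide), Finset.sum_singleton]
      norm_num [E01, E02, E03, E04, E10, E12, E13, E14, E20, E21, E23, E24, E30, E31, E32, E34, E40, E41, E42, E43] : ricci 4 ((fun _ => (1:ℝ) : FlagIdx 4 → ℝ)) 2 3 = (7/20 : ℝ))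
  | exact (by
      rw [ricci, show (univ.filter fun k : Fin 5 => k ≠ (2:Fin 5) ∧ k ≠ (4:Fin 5)) = {0,1,3} from by decide,
        Finset.sum_insert (by decide), Finset.sum_insert (by decide), Finset.sum_singleton]
      norm_num [E01, E02, E03, E04, E10, E12, E13, E14, E20, E21, E23, E24, E30, E31, E32, E34, E40, E41, E42, E43] : ricci 4 ((fun _ => (1:ℝ) : FlagIdx 4 → ℝ)) 2 4 = (7/20 : ℝ))
  | exact (by
      rw [ricci, show (univ.filter fun k : Fin 5 => k ≠ (3:Fin 5) ∧ k ≠ (4:Fin 5)) = {0,1,2} from by decide,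
        Finset.sum_insert (by decide), Finset.sum_insert (by decide), Finset.sum_singleton]
      norm_num [E01, E02, E03, E04, E10, E12, E13, E14, E20, E21, E23, E24, E30, E31, E32, E34, E40, E41, E42, E43] : ricci 4 ((fun _ => (1:ℝ) : FlagIdx 4 → ℝ)) 3 4 = (7/20 : ℝ))



noncomputable def permFam (n : ℕ) (τ : Equiv.Perm (Fin (n+1))) (lam : FlagIdx n → ℝ) :
    FlagIdx n → ℝ :=
  fun p => symExt n lam (τ p.1.1) (τ p.1.2)

lemma symExt_comm {n : ℕ} (lam : FlagIdx n → ℝ) (i j : Fin (n+1)) :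
    symExt n lam i j = symExt n lam j i := by
  unfold symExt
  rcases lt_trichotomy i j with h | h | h
  · rw [dif_pos h, dif_neg h.asymm, dif_pos h]
  · subst h; rfl
  · rw [dif_neg h.asymm, dif_pos h, dif_pos h]

lemma symExt_permFam {n : ℕ} (τ : Equiv.Perm (Fin (n+1))) (lam : FlagIdx n → ℝ)
    (i j : Fin (n+1)) :
    symExt n (permFam n τ lam) i j = symExt n lam (τ i) (τ j) := by
  rcases lt_trichotomy i j with h | h | h
  · rw [symExt, dif_pos h]; rfl
  · subst h; rw [symExt, dif_neg (lt_irrefl i), dif_neg (lt_irrefl i),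
      symExt, dif_neg (lt_irrefl (τ i)), dif_neg (lt_irrefl (τ i))]
  · rw [symExt, dif_neg h.asymm, dif_pos h]
    exact (symExt_comm lam (τ j) (τ i))

lemma ricci_perm {n : ℕ} (τ : Equiv.Perm (Fin (n+1))) (lam : FlagIdx n → ℝ)
    (i j : Fin (n+1)) :
    ricci n (permFam n τ lam) i j = ricci n lam (τ i) (τ j) := by
  unfold ricci
  rw [symExt_permFam]
  congr 1
  congr 1
  refine Finset.sum_equiv τ (fun k => ?_) (fun k _ => ?_)
  · simp [EmbeddingLike.apply_eq_iff_eq]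
  · simp only [symExt_permFam]

lemma ricci_comm {n : ℕ} (lam : FlagIdx n → ℝ) (i j : Fin (n+1)) :
    ricci n lam i j = ricci n lam j i := by
  unfold ricci
  rw [symExt_comm lam j i]
  congr 1
  congr 1
  rw [show (univ.filter fun k : Fin (n+1) => k ≠ j ∧ k ≠ i)
      = (univ.filter fun k : Fin (n+1) => k ≠ i ∧ k ≠ j) from by
    apply Finset.filter_congr; intro k _; simp [and_comm]]
  refine Finset.sum_congr rfl (fun k _ => ?_)
  rw [symExt_comm lam k j, symExt_comm lam k i]
  ring

lemma isEinstein_perm {n : ℕ} (τ : Equiv.Perm (Fin (n+1))) (lam : FlagIdx n → ℝ) (k : ℝ)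
    (h : IsEinstein n lam k) : IsEinstein n (permFam n τ lam) k := by
  intro i j hij
  rw [ricci_perm]
  rcases lt_trichotomy (τ i) (τ j) with h' | h' | h'
  · exact h _ _ h'
  · exact absurd (τ.injective h') hij.ne
  · rw [ricci_comm]; exact h _ _ h'

lemma kahlerFam_eq_perm {n : ℕ} (σ : Equiv.Perm (Fin (n+1))) :
    kahlerFam n σ = permFam n σ (kahlerFam n 1) := by
  funext p
  obtain ⟨⟨i, j⟩, hij⟩ := p
  have hne : σ i ≠ σ j := fun h => hij.ne (σ.injective h)
  show |((σ i : ℕ) : ℝ) - ((σ j : ℕ) : ℝ)| = symExt n (kahlerFam n 1) (σ i) (σ j)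
  rcases hne.lt_or_gt with h | h
  · rw [symExt, dif_pos h]; simp [kahlerFam]
  · rw [symExt, dif_neg h.asymm, dif_pos h]; simp [kahlerFam, abs_sub_comm]

lemma symExt_tFam {n : ℕ} (t x y : Fin (n+1)) (hxy : x ≠ y) :
    symExt n (tFam n t) x y = if x = t ∨ y = t then (n : ℝ)/((n : ℝ)+2) else 1 := by
  rcases hxy.lt_or_gt with h | h
  · rw [symExt, dif_pos h]; rfl
  · rw [symExt, dif_neg h.asymm, dif_pos h]
    show (if y = t ∨ x = t then _ else _) = _
    by_cases hx : x = t <;> by_cases hy : y = t <;> simp [hx, hy]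

lemma tFam_eq_perm {n : ℕ} [NeZero (n+1)] (t : Fin (n+1)) :
    tFam n t = permFam n (Equiv.swap 0 t) (tFam n 0) := by
  funext p
  obtain ⟨⟨i, j⟩, hij⟩ := p
  have hne : Equiv.swap (0 : Fin (n+1)) t i ≠ Equiv.swap (0 : Fin (n+1)) t j :=
    fun h => hij.ne ((Equiv.swap 0 t).injective h)
  show tFam n t ⟨(i, j), hij⟩ = symExt n (tFam n 0) _ _
  rw [symExt_tFam _ _ _ hne]
  have key : ∀ a : Fin (n+1), (Equiv.swap (0 : Fin (n+1)) t a = 0) ↔ a = t := by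
    intro a
    exact ⟨fun h => by simpa using congrArg (Equiv.swap (0 : Fin (n+1)) t) h,
      fun h => by simp [h]⟩
  simp only [key]
  rfl

/-! ### Non-proportionality toolkit -/

lemma not_prop {f g : FlagIdx 4 → ℝ} {A a B b : ℝ}
    (hfA : ∃ p, f p = A) (hfub : ∀ p, f p ≤ A) (hfa : ∃ p, f p = a) (hflb : ∀ p, a ≤ f p)
    (hgB : ∃ p, g p = B) (hgub : ∀ p, g p ≤ B) (hgb : ∃ p, g p = b) (hglb : ∀ p, b ≤ g p)
    (hB : 0 < B) (hne : f ≠ g) (hcon : A * b = B * a → A = B) :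
    ¬ Proportional 4 f g := by
  rintro ⟨c, hc, hfg⟩
  obtain ⟨pA, hpA⟩ := hfA; obtain ⟨pa, hpa⟩ := hfa
  obtain ⟨qB, hqB⟩ := hgB; obtain ⟨qb, hqb⟩ := hgb
  have hAcB : A = c * B := by
    have h1 : A ≤ c * B := by
      rw [← hpA, hfg pA]
      exact mul_le_mul_of_nonneg_left (hgub pA) hc.le
    have h2 : c * B ≤ A := by
      have : f qB = c * B := by rw [hfg qB, hqB]
      rw [← this]; exact hfub qB
    linarith
  have hacb : a = c * b := by
    have h1 : a ≤ c * b := by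
      have : f qb = c * b := by rw [hfg qb, hqb]
      rw [← this]; exact hflb qb
    have h2 : c * b ≤ a := by
      rw [← hpa, hfg pa]
      exact mul_le_mul_of_nonneg_left (hglb pa) hc.le
    linarith
  have hAB : A = B := hcon (by rw [hAcB, hacb]; ring)
  have hc1 : c = 1 := by
    have : c * B = 1 * B := by rw [← hAcB, hAB, one_mul]
    exact mul_right_cancel₀ hB.ne' this
  exact hne (funext fun p => by rw [hfg p, hc1, one_mul])

def pair01 : FlagIdx 4 := ⟨(0, 1), by decide⟩

def mkPair {a b : Fin 5} (h : a ≠ b) : FlagIdx 4 :=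
  if h' : a < b then ⟨(a, b), h'⟩ else ⟨(b, a), h.lt_or_gt.resolve_left h'⟩

lemma kahler_mkPair (σ : Equiv.Perm (Fin 5)) {a b : Fin 5} (h : a ≠ b) :
    kahlerFam 4 σ (mkPair h) = |((σ a : ℕ) : ℝ) - ((σ b : ℕ) : ℝ)| := by
  unfold mkPair
  split
  · rfl
  · simp [kahlerFam, abs_sub_comm]

lemma kahler_ub (σ : Equiv.Perm (Fin 5)) (p : FlagIdx 4) : kahlerFam 4 σ p ≤ 4 := by
  obtain ⟨⟨i, j⟩, hij⟩ := p
  show |((σ i : ℕ) : ℝ) - ((σ j : ℕ) : ℝ)| ≤ 4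
  have h1 : ((σ i : ℕ) : ℝ) ≤ 4 := by exact_mod_cast Nat.le_of_lt_succ (σ i).isLt
  have h2 : ((σ j : ℕ) : ℝ) ≤ 4 := by exact_mod_cast Nat.le_of_lt_succ (σ j).isLt
  have h3 : (0 : ℝ) ≤ ((σ i : ℕ) : ℝ) := Nat.cast_nonneg _
  have h4 : (0 : ℝ) ≤ ((σ j : ℕ) : ℝ) := Nat.cast_nonneg _
  rw [abs_le]; constructor <;> linarith

lemma kahler_lb (σ : Equiv.Perm (Fin 5)) (p : FlagIdx 4) : 1 ≤ kahlerFam 4 σ p := by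
  obtain ⟨⟨i, j⟩, hij⟩ := p
  show (1 : ℝ) ≤ |((σ i : ℕ) : ℝ) - ((σ j : ℕ) : ℝ)|
  have hne : σ i ≠ σ j := fun h => hij.ne (σ.injective h)
  have hv : ((σ i : ℕ) : ℤ) ≠ ((σ j : ℕ) : ℤ) := by
    exact_mod_cast fun h => hne (Fin.ext h)
  have h1 : (1 : ℤ) ≤ |((σ i : ℕ) : ℤ) - ((σ j : ℕ) : ℤ)| :=
    Int.one_le_abs (sub_ne_zero.2 hv)
  exact_mod_cast h1

lemma kahler_max (σ : Equiv.Perm (Fin 5)) : ∃ p, kahlerFam 4 σ p = 4 := by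
  have h : σ.symm 4 ≠ σ.symm 0 := fun h => by simpa using congrArg σ h
  refine ⟨mkPair h, ?_⟩
  rw [kahler_mkPair σ h, Equiv.apply_symm_apply, Equiv.apply_symm_apply]
  norm_num [(show ((4 : Fin 5) : ℕ) = 4 from rfl), (show ((0 : Fin 5) : ℕ) = 0 from rfl)]

lemma kahler_min (σ : Equiv.Perm (Fin 5)) : ∃ p, kahlerFam 4 σ p = 1 := by
  have h : σ.symm 1 ≠ σ.symm 0 := fun h => by simpa using congrArg σ h
  refine ⟨mkPair h, ?_⟩
  rw [kahler_mkPair σ h, Equiv.apply_symm_apply, Equiv.apply_symm_apply]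
  norm_num [(show ((1 : Fin 5) : ℕ) = 1 from rfl), (show ((0 : Fin 5) : ℕ) = 0 from rfl)]

lemma tfam_val (t : Fin 5) (p : FlagIdx 4) :
    tFam 4 t p = 2/3 ∨ tFam 4 t p = 1 := by
  unfold tFam
  split
  · left; norm_num
  · right; rfl

lemma tfam_ub (t : Fin 5) (p : FlagIdx 4) : tFam 4 t p ≤ 1 := by
  rcases tfam_val t p with h | h <;> rw [h] <;> norm_num

lemma tfam_lb (t : Fin 5) (p : FlagIdx 4) : 2/3 ≤ tFam 4 t p := by
  rcases tfam_val t p with h | h <;> rw [h] <;> norm_num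

lemma tfam_max (t : Fin 5) : ∃ p, tFam 4 t p = 1 := by
  fin_cases t
  · exact ⟨⟨(1, 2), by decide⟩, by rw [tFam]; rw [if_neg (by decide)]⟩
  · exact ⟨⟨(2, 3), by decide⟩, by rw [tFam]; rw [if_neg (by decide)]⟩
  · exact ⟨⟨(0, 1), by decide⟩, by rw [tFam]; rw [if_neg (by decide)]⟩
  · exact ⟨⟨(0, 1), by decide⟩, by rw [tFam]; rw [if_neg (by decide)]⟩
  · exact ⟨⟨(0, 1), by decide⟩, by rw [tFam]; rw [if_neg (by decide)]⟩

lemma tfam_min (t : Fin 5) : ∃ p, tFam 4 t p = 2/3 := by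
  fin_cases t
  · exact ⟨⟨(0, 1), by decide⟩, by rw [tFam]; rw [if_pos (by decide)]; norm_num⟩
  · exact ⟨⟨(0, 1), by decide⟩, by rw [tFam]; rw [if_pos (by decide)]; norm_num⟩
  · exact ⟨⟨(0, 2), by decide⟩, by rw [tFam]; rw [if_pos (by decide)]; norm_num⟩
  · exact ⟨⟨(0, 3), by decide⟩, by rw [tFam]; rw [if_pos (by decide)]; norm_num⟩
  · exact ⟨⟨(0, 4), by decide⟩, by rw [tFam]; rw [if_pos (by decide)]; norm_num⟩

/-! ### Cardinality toolkit -/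

def natDist (a b : Fin 5) : ℕ := max a.val b.val - min a.val b.val

def knVec (σ : Equiv.Perm (Fin 5)) : FlagIdx 4 → ℕ := fun p => 6 * natDist (σ p.1.1) (σ p.1.2)

def tnVec (t : Fin 5) : FlagIdx 4 → ℕ := fun p => if p.1.1 = t ∨ p.1.2 = t then 4 else 6

def oneVec : FlagIdx 4 → ℕ := fun _ => 6

def DD : Finset (FlagIdx 4 → ℕ) :=
  (Finset.univ.image knVec) ∪ (Finset.univ.image tnVec) ∪ {oneVec}

set_option maxRecDepth 100000 in
lemma DD_card : 66 ≤ DD.card := by decide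

noncomputable def uMap (v : FlagIdx 4 → ℕ) : FlagIdx 4 → ℝ := fun p => (v p : ℝ) / 6

lemma uMap_inj : Function.Injective uMap := by
  intro v w h
  funext p
  have h1 := congrFun h p
  unfold uMap at h1
  have h2 : ((v p : ℝ)) = (w p : ℝ) := by
    field_simp at h1; exact_mod_cast h1
  exact_mod_cast h2

lemma uMap_kn (σ : Equiv.Perm (Fin 5)) : uMap (knVec σ) = kahlerFam 4 σ := by
  funext p
  obtain ⟨⟨i, j⟩, hij⟩ := p
  show ((6 * natDist (σ i) (σ j) : ℕ) : ℝ) / 6 = |((σ i : ℕ) : ℝ) - ((σ j : ℕ) : ℝ)|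
  have key : ((natDist (σ i) (σ j) : ℕ) : ℝ) = |((σ i : ℕ) : ℝ) - ((σ j : ℕ) : ℝ)| := by
    unfold natDist
    rcases le_total ((σ i : ℕ)) ((σ j : ℕ)) with h | h
    · rw [max_eq_right h, min_eq_left h, Nat.cast_sub h, abs_sub_comm,
        abs_of_nonneg (by simp [h, sub_nonneg, Nat.cast_le])]
    · rw [max_eq_left h, min_eq_right h, Nat.cast_sub h,
        abs_of_nonneg (by simp [h, sub_nonneg, Nat.cast_le])]
  push_cast
  push_cast at key
  rw [key]
  ring

lemma uMap_tn (t : Fin 5) : uMap (tnVec t) = tFam 4 t := by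
  funext p
  unfold uMap tnVec tFam
  by_cases h : p.1.1 = t ∨ p.1.2 = t <;> simp [h] <;> norm_num

lemma uMap_one : uMap oneVec = (fun _ => (1 : ℝ)) := by
  funext p
  unfold uMap oneVec
  norm_num

/-- For `n = 4` (the flag manifold `SU(5)/T⁴`), there are at least
`66` pairwise non-proportional Einstein solutions: the `60` Kähler–Einstein
tuples, the `5` tuples `tFam 4 t` (with value `2/3 = 4/6` on pairs through `t`),
and the constant tuple `1`. -/

theorem su5_66_einstein (E : Set (FlagIdx 4 → ℝ))
    (hE : E = {f | ∃ σ : Equiv.Perm (Fin 5), f = kahlerFam 4 σ} ∪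
              {f | ∃ t : Fin 5, f = tFam 4 t} ∪ {fun _ => 1}) :
    (∀ f ∈ E, ∃ k : ℝ, IsEinstein 4 f k) ∧
    (∀ f ∈ E, ∀ g ∈ E, f ≠ g → ¬ Proportional 4 f g) ∧
    66 ≤ E.ncard := by
  subst hE
  refine ⟨?_, ?_, ?_⟩
  · -- every element is Einstein
    rintro f ((⟨σ, rfl⟩ | ⟨t, rfl⟩) | hf)
    · exact ⟨1/5, by rw [kahlerFam_eq_perm]; exact isEinstein_perm _ _ _ einstein_kahler_id⟩
    · exact ⟨33/80, by rw [tFam_eq_perm]; exact isEinstein_perm _ _ _ einstein_tfam0⟩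
    · rcases hf with rfl
      exact ⟨7/20, einstein_one⟩
  · -- pairwise non-proportional
    rintro f ((⟨σ, rfl⟩ | ⟨t, rfl⟩) | hf) g ((⟨σ', rfl⟩ | ⟨t', rfl⟩) | hg) hne
    · exact not_prop (kahler_max σ) (kahler_ub σ) (kahler_min σ) (kahler_lb σ)
        (kahler_max σ') (kahler_ub σ') (kahler_min σ') (kahler_lb σ')
        (by norm_num) hne (fun _ => rfl)
    · exact not_prop (kahler_max σ) (kahler_ub σ) (kahler_min σ) (kahler_lb σ)
        (tfam_max t') (tfam_ub t') (tfam_min t') (tfam_lb t')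
        (by norm_num) hne (fun h => by norm_num at h)
    · rcases hg with rfl
      exact not_prop (kahler_max σ) (kahler_ub σ) (kahler_min σ) (kahler_lb σ)
        ⟨pair01, rfl⟩ (fun _ => le_refl 1) ⟨pair01, rfl⟩ (fun _ => le_refl 1)
        (by norm_num) hne (fun h => by norm_num at h)
    · exact not_prop (tfam_max t) (tfam_ub t) (tfam_min t) (tfam_lb t)
        (kahler_max σ') (kahler_ub σ') (kahler_min σ') (kahler_lb σ')
        (by norm_num) hne (fun h => by norm_num at h)
    · exact not_prop (tfam_max t) (tfam_ub t) (tfam_min t) (tfam_lb t)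
        (tfam_max t') (tfam_ub t') (tfam_min t') (tfam_lb t')
        (by norm_num) hne (fun _ => rfl)
    · rcases hg with rfl
      exact not_prop (tfam_max t) (tfam_ub t) (tfam_min t) (tfam_lb t)
        ⟨pair01, rfl⟩ (fun _ => le_refl 1) ⟨pair01, rfl⟩ (fun _ => le_refl 1)
        (by norm_num) hne (fun h => by norm_num at h)
    · rcases hf with rfl
      exact not_prop ⟨pair01, rfl⟩ (fun _ => le_refl 1) ⟨pair01, rfl⟩ (fun _ => le_refl 1)
        (kahler_max σ') (kahler_ub σ') (kahler_min σ') (kahler_lb σ')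
        (by norm_num) hne (fun h => by norm_num at h)
    · rcases hf with rfl
      exact not_prop ⟨pair01, rfl⟩ (fun _ => le_refl 1) ⟨pair01, rfl⟩ (fun _ => le_refl 1)
        (tfam_max t') (tfam_ub t') (tfam_min t') (tfam_lb t')
        (by norm_num) hne (fun h => by norm_num at h)
    · rcases hf with rfl; rcases hg with rfl
      exact absurd rfl hne
  · -- cardinality
    have hfin : ({f | ∃ σ : Equiv.Perm (Fin 5), f = kahlerFam 4 σ} ∪
        {f | ∃ t : Fin 5, f = tFam 4 t} ∪ {fun _ => (1 : ℝ)} :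
        Set (FlagIdx 4 → ℝ)).Finite := by
      refine Set.Finite.union (Set.Finite.union ?_ ?_) (Set.finite_singleton _)
      · have : {f | ∃ σ : Equiv.Perm (Fin 5), f = kahlerFam 4 σ} =
            Set.range (kahlerFam 4) := by ext f; simp [eq_comm]
        rw [this]; exact Set.finite_range _
      · have : {f | ∃ t : Fin 5, f = tFam 4 t} = Set.range (tFam 4) := by
          ext f; simp [eq_comm]
        rw [this]; exact Set.finite_range _
    have hsub : uMap '' ↑DD ⊆ ({f | ∃ σ : Equiv.Perm (Fin 5), f = kahlerFam 4 σ} ∪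
        {f | ∃ t : Fin 5, f = tFam 4 t} ∪ {fun _ => (1 : ℝ)} :
        Set (FlagIdx 4 → ℝ)) := by
      rintro f ⟨v, hv, rfl⟩
      rw [Finset.mem_coe] at hv
      unfold DD at hv
      rw [Finset.mem_union, Finset.mem_union] at hv
      rcases hv with (hv | hv) | hv
      · obtain ⟨σ, _, rfl⟩ := Finset.mem_image.1 hv
        exact Or.inl (Or.inl ⟨σ, (uMap_kn σ)⟩)
      · obtain ⟨t, _, rfl⟩ := Finset.mem_image.1 hv
        exact Or.inl (Or.inr ⟨t, (uMap_tn t)⟩)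
      · rw [Finset.mem_singleton] at hv
        subst hv
        exact Or.inr (by rw [uMap_one]; rfl)
    calc (66 : ℕ) ≤ DD.card := DD_card
      _ = (uMap '' ↑DD).ncard := by
            rw [Set.ncard_image_of_injective _ uMap_inj, Set.ncard_coe_finset]
      _ ≤ _ := Set.ncard_le_ncard hsub hfin
end

section
/- For n = 5 (the full flag manifold SU(6)/T⁵), there exist at least 367 pairwise non-proportional Einstein solutions: the 360 Kähler–Einstein tuples λ_{ij} = |σ(i) − σ(j)| for permutations σ of {1, …, 6}, the 6 tuples λ_{ij} = 5/7 if t ∈ {i,j} and λ_{ij} = 1 otherwise (t ∈ {1, …, 6}), and the constant tuple λ_{ij} = 1. -/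
open Finset

section SU6Aux

open Equiv

lemma abs_cast_sub (x y : ℕ) : |((x:ℝ)) - (y:ℝ)| = ((max x y - min x y : ℕ) : ℝ) := by
  rcases le_total x y with h | h
  · rw [abs_sub_comm, abs_of_nonneg (sub_nonneg.2 (Nat.cast_le.2 h)),
      max_eq_right h, min_eq_left h, Nat.cast_sub h]
  · rw [abs_of_nonneg (sub_nonneg.2 (Nat.cast_le.2 h)),
      max_eq_left h, min_eq_right h, Nat.cast_sub h]

/-- integer distance on `Fin 6` -/
def Dd (a b : Fin 6) : ℕ := max a.val b.val - min a.val b.val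

noncomputable def L0 : Fin 6 → Fin 6 → ℝ := fun a b => (Dd a b : ℝ)
noncomputable def Lt0 : Fin 6 → Fin 6 → ℝ := fun a b => if a = 0 ∨ b = 0 then 5/7 else 1

lemma L0_symm : ∀ a b, L0 a b = L0 b a := by
  intro a b; simp [L0, Dd, max_comm, min_comm]
lemma Lt0_symm : ∀ a b, Lt0 a b = Lt0 b a := by
  intro a b; simp [Lt0, or_comm]

lemma kahler_eq (σ : Equiv.Perm (Fin 6)) :
    kahlerFam 5 σ = fun p => L0 (σ p.1.1) (σ p.1.2) := by
  funext p
  simp only [kahlerFam, L0, Dd]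
  exact abs_cast_sub _ _

lemma tFam_eq (t : Fin 6) :
    tFam 5 t = fun p => Lt0 (Equiv.swap 0 t p.1.1) (Equiv.swap 0 t p.1.2) := by
  funext p
  have hsw : ∀ x : Fin 6, Equiv.swap 0 t x = 0 ↔ x = t := by
    intro x
    rw [Equiv.apply_eq_iff_eq_symm_apply, Equiv.symm_swap, Equiv.swap_apply_left]
  simp only [tFam, Lt0, hsw]
  norm_num

lemma symExt_of_symm (n : ℕ) (L : Fin (n+1) → Fin (n+1) → ℝ) (hL : ∀ i j, L i j = L j i)
    (i j : Fin (n+1)) (hij : i ≠ j) : symExt n (fun p => L p.1.1 p.1.2) i j = L i j := by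
  unfold symExt
  rcases lt_trichotomy i j with h | h | h
  · simp [h]
  · exact absurd h hij
  · simp [h, not_lt_of_gt h, hL i j]

lemma ricci_of_symm (n : ℕ) (L : Fin (n+1) → Fin (n+1) → ℝ) (hL : ∀ i j, L i j = L j i)
    (i j : Fin (n+1)) (hij : i ≠ j) :
    ricci n (fun p => L p.1.1 p.1.2) i j = 1 / (2 * L i j) + (1 / (4 * ((n : ℝ) + 1))) *
    ∑ k ∈ univ.filter (fun k : Fin (n + 1) => k ≠ i ∧ k ≠ j),
      (L i j / (L i k * L k j) - L i k / (L i j * L k j) - L j k / (L i j * L i k)) := by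
  unfold ricci
  rw [symExt_of_symm n L hL i j hij]
  congr 2
  refine Finset.sum_congr rfl ?_
  intro k hk
  simp only [mem_filter, mem_univ, true_and] at hk
  rw [symExt_of_symm n L hL i k (Ne.symm hk.1), symExt_of_symm n L hL k j hk.2,
    symExt_of_symm n L hL j k (Ne.symm hk.2)]

lemma ricci_comp (n : ℕ) (L : Fin (n+1) → Fin (n+1) → ℝ) (hL : ∀ i j, L i j = L j i)
    (σ : Equiv.Perm (Fin (n+1))) (i j : Fin (n+1)) (hij : i ≠ j) :
    ricci n (fun p => L (σ p.1.1) (σ p.1.2)) i j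
      = ricci n (fun p => L p.1.1 p.1.2) (σ i) (σ j) := by
  have hL' : ∀ a b, L (σ a) (σ b) = L (σ b) (σ a) := fun a b => hL _ _
  rw [ricci_of_symm n (fun a b => L (σ a) (σ b)) hL' i j hij,
    ricci_of_symm n L hL (σ i) (σ j) (fun h => hij (σ.injective h))]
  congr 2
  refine Finset.sum_equiv σ ?_ ?_
  · intro k
    simp [σ.injective.ne_iff]
  · intro k _
    rfl

set_option maxHeartbeats 2000000 in
lemma baseC : ∀ a b : Fin 6, a ≠ b → ricci 5 (fun _ => (1:ℝ)) a b = 1/3 := by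
  have hsum : ∀ f : Fin (5+1) → ℝ, (∑ k, f k) = f 0 + f 1 + f 2 + f 3 + f 4 + f 5 :=
    fun f => Fin.sum_univ_six f
  have h0 : ((0 : Fin (5+1)) : ℕ) = 0 := rfl
  have h1 : ((1 : Fin (5+1)) : ℕ) = 1 := rfl
  have h2 : ((2 : Fin (5+1)) : ℕ) = 2 := rfl
  have h3 : ((3 : Fin (5+1)) : ℕ) = 3 := rfl
  have h4 : ((4 : Fin (5+1)) : ℕ) = 4 := rfl
  have h5 : ((5 : Fin (5+1)) : ℕ) = 5 := rfl
  intro a b hab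
  rw [show (fun _ : FlagIdx 5 => (1:ℝ)) = (fun p : FlagIdx 5 => (fun _ _ : Fin 6 => (1:ℝ)) p.1.1 p.1.2) from rfl,
    ricci_of_symm 5 (fun _ _ : Fin 6 => (1:ℝ)) (fun _ _ => rfl) a b hab, Finset.sum_filter, hsum]
  fin_cases a <;> fin_cases b <;> first
    | exact absurd rfl hab
    | norm_num [Fin.ext_iff, h0, h1, h2, h3, h4, h5]

set_option maxHeartbeats 4000000 in
lemma baseK : ∀ a b : Fin 6, a ≠ b → ricci 5 (fun p => L0 p.1.1 p.1.2) a b = 1/6 := by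
  have hsum : ∀ f : Fin (5+1) → ℝ, (∑ k, f k) = f 0 + f 1 + f 2 + f 3 + f 4 + f 5 :=
    fun f => Fin.sum_univ_six f
  have h0 : ((0 : Fin (5+1)) : ℕ) = 0 := rfl
  have h1 : ((1 : Fin (5+1)) : ℕ) = 1 := rfl
  have h2 : ((2 : Fin (5+1)) : ℕ) = 2 := rfl
  have h3 : ((3 : Fin (5+1)) : ℕ) = 3 := rfl
  have h4 : ((4 : Fin (5+1)) : ℕ) = 4 := rfl
  have h5 : ((5 : Fin (5+1)) : ℕ) = 5 := rfl
  intro a b hab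
  rw [ricci_of_symm 5 L0 L0_symm a b hab, Finset.sum_filter, hsum]
  fin_cases a <;> fin_cases b <;> first
    | exact absurd rfl hab
    | norm_num [L0, Dd, Fin.ext_iff, h0, h1, h2, h3, h4, h5]

set_option maxHeartbeats 4000000 in
lemma baseT : ∀ a b : Fin 6, a ≠ b → ricci 5 (fun p => Lt0 p.1.1 p.1.2) a b = 28/75 := by
  have hsum : ∀ f : Fin (5+1) → ℝ, (∑ k, f k) = f 0 + f 1 + f 2 + f 3 + f 4 + f 5 :=
    fun f => Fin.sum_univ_six f
  have h0 : ((0 : Fin (5+1)) : ℕ) = 0 := rfl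
  have h1 : ((1 : Fin (5+1)) : ℕ) = 1 := rfl
  have h2 : ((2 : Fin (5+1)) : ℕ) = 2 := rfl
  have h3 : ((3 : Fin (5+1)) : ℕ) = 3 := rfl
  have h4 : ((4 : Fin (5+1)) : ℕ) = 4 := rfl
  have h5 : ((5 : Fin (5+1)) : ℕ) = 5 := rfl
  intro a b hab
  rw [ricci_of_symm 5 Lt0 Lt0_symm a b hab, Finset.sum_filter, hsum]
  fin_cases a <;> fin_cases b <;> first
    | exact absurd rfl hab
    | norm_num [Lt0, Fin.ext_iff, h0, h1, h2, h3, h4, h5]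

lemma einstein_kahler (σ : Equiv.Perm (Fin 6)) : IsEinstein 5 (kahlerFam 5 σ) (1/6) := by
  intro i j hij
  rw [kahler_eq σ, ricci_comp 5 L0 L0_symm σ i j (ne_of_lt hij)]
  exact baseK (σ i) (σ j) (fun h => (ne_of_lt hij) (σ.injective h))

lemma einstein_tFam (t : Fin 6) : IsEinstein 5 (tFam 5 t) (28/75) := by
  intro i j hij
  rw [tFam_eq t, ricci_comp 5 Lt0 Lt0_symm (Equiv.swap 0 t) i j (ne_of_lt hij)]
  exact baseT _ _ (fun h => (ne_of_lt hij) ((Equiv.swap 0 t).injective h))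

lemma einstein_const : IsEinstein 5 (fun _ => (1:ℝ)) (1/3) :=
  fun i j hij => baseC i j (ne_of_lt hij)

end SU6Aux

section SU6Aux2

/-! ### basic facts about `Dd` -/

lemma Dd_add (a b : Fin 6) : Dd a b = (a.val - b.val) + (b.val - a.val) := by
  unfold Dd
  rcases Nat.le_total a.val b.val with h | h
  · rw [max_eq_right h, min_eq_left h]; omega
  · rw [max_eq_left h, min_eq_right h]; omega

lemma Dd_comm (a b : Fin 6) : Dd a b = Dd b a := by
  unfold Dd; rw [max_comm, min_comm]

lemma Dd_le5 (a b : Fin 6) : Dd a b ≤ 5 := by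
  have := a.isLt; have := b.isLt; rw [Dd_add]; omega

lemma Dd_ge1 {a b : Fin 6} (h : a ≠ b) : 1 ≤ Dd a b := by
  have : a.val ≠ b.val := fun hh => h (Fin.ext hh)
  rw [Dd_add]; omega

/-! ### sorted pairs -/

def spr (i j : Fin 6) (h : i ≠ j) : FlagIdx 5 :=
  if hlt : i < j then ⟨(i, j), hlt⟩ else ⟨(j, i), h.lt_or_gt.resolve_left hlt⟩

lemma spr_spec (i j : Fin 6) (h : i ≠ j) :
    ((spr i j h).1.1 = i ∧ (spr i j h).1.2 = j) ∨
    ((spr i j h).1.1 = j ∧ (spr i j h).1.2 = i) := by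
  unfold spr; split <;> simp

lemma kah_val (σ : Equiv.Perm (Fin 6)) (p : FlagIdx 5) :
    kahlerFam 5 σ p = (Dd (σ p.1.1) (σ p.1.2) : ℝ) :=
  congrFun (kahler_eq σ) p

lemma kah_spr (σ : Equiv.Perm (Fin 6)) {i j : Fin 6} (h : i ≠ j) :
    kahlerFam 5 σ (spr i j h) = (Dd (σ i) (σ j) : ℝ) := by
  rcases spr_spec i j h with ⟨h1, h2⟩ | ⟨h1, h2⟩ <;> rw [kah_val, h1, h2]
  rw [Dd_comm]

lemma tFam_val (t : Fin 6) (p : FlagIdx 5) :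
    tFam 5 t p = if p.1.1 = t ∨ p.1.2 = t then (5:ℝ)/7 else 1 := by
  unfold tFam; norm_num

lemma tFam_spr_mem (t : Fin 6) {i j : Fin 6} (h : i ≠ j) (h' : i = t ∨ j = t) :
    tFam 5 t (spr i j h) = 5/7 := by
  rw [tFam_val, if_pos]
  rcases spr_spec i j h with ⟨h1, h2⟩ | ⟨h1, h2⟩ <;> rw [h1, h2] <;> tauto

lemma tFam_spr_not (t : Fin 6) {i j : Fin 6} (h : i ≠ j) (h1 : i ≠ t) (h2 : j ≠ t) :
    tFam 5 t (spr i j h) = 1 := by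
  rw [tFam_val, if_neg]
  rcases spr_spec i j h with ⟨ha, hb⟩ | ⟨ha, hb⟩ <;> rw [ha, hb] <;> tauto

/-! ### values of Kähler families -/

lemma kah_le (σ : Equiv.Perm (Fin 6)) (p : FlagIdx 5) : kahlerFam 5 σ p ≤ 5 := by
  rw [kah_val]
  exact_mod_cast Dd_le5 _ _

lemma kah_ge1 (σ : Equiv.Perm (Fin 6)) (p : FlagIdx 5) : 1 ≤ kahlerFam 5 σ p := by
  rw [kah_val]
  have hne : σ p.1.1 ≠ σ p.1.2 := fun h => (ne_of_lt p.2) (σ.injective h)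
  exact_mod_cast Dd_ge1 hne

lemma kah_exists_five (σ : Equiv.Perm (Fin 6)) : ∃ p : FlagIdx 5, kahlerFam 5 σ p = 5 := by
  have h : σ⁻¹ 0 ≠ σ⁻¹ 5 := fun h => by
    have := σ⁻¹.injective h
    simp at this
  refine ⟨spr _ _ h, ?_⟩
  rw [kah_spr σ h]
  norm_num [Equiv.apply_symm_apply, show Dd 0 5 = 5 from rfl]

lemma kah_exists_one (σ : Equiv.Perm (Fin 6)) : ∃ p : FlagIdx 5, kahlerFam 5 σ p = 1 := by
  have h : σ⁻¹ 0 ≠ σ⁻¹ 1 := fun h => by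
    have := σ⁻¹.injective h
    simp at this
  refine ⟨spr _ _ h, ?_⟩
  rw [kah_spr σ h]
  norm_num [Equiv.apply_symm_apply, show Dd 0 1 = 1 from rfl]

/-! ### small existence facts -/

lemma exists_ne1 : ∀ t t' : Fin 6, ∃ s : Fin 6, s ≠ t ∧ s ≠ t' := by decide

lemma exists_ne2 : ∀ t t' : Fin 6, ∃ a b : Fin 6, a ≠ b ∧ a ≠ t ∧ a ≠ t' ∧ b ≠ t ∧ b ≠ t' := by
  decide

/-! ### distinctness -/

lemma kah_ne_tFam (σ : Equiv.Perm (Fin 6)) (t : Fin 6) : kahlerFam 5 σ ≠ tFam 5 t := by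
  intro h
  obtain ⟨s, hst, -⟩ := exists_ne1 t t
  have hts : t ≠ s := hst.symm
  have h1 := congrFun h (spr t s hts)
  rw [kah_spr σ hts, tFam_spr_mem t hts (Or.inl rfl)] at h1
  have h2 : (7 * Dd (σ t) (σ s) : ℕ) = (5 : ℕ) := by
    have : (7 : ℝ) * (Dd (σ t) (σ s) : ℝ) = 5 := by linarith
    exact_mod_cast this
  omega

lemma kah_ne_const (σ : Equiv.Perm (Fin 6)) : kahlerFam 5 σ ≠ fun _ => (1:ℝ) := by
  intro h
  obtain ⟨p, hp⟩ := kah_exists_five σ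
  have := congrFun h p
  rw [hp] at this
  norm_num at this

lemma tFam_ne_const (t : Fin 6) : tFam 5 t ≠ fun _ => (1:ℝ) := by
  intro h
  obtain ⟨s, hst, -⟩ := exists_ne1 t t
  have hts : t ≠ s := hst.symm
  have h1 := congrFun h (spr t s hts)
  rw [tFam_spr_mem t hts (Or.inl rfl)] at h1
  norm_num at h1

lemma tFam_ne (t t' : Fin 6) (htt : t ≠ t') : tFam 5 t ≠ tFam 5 t' := by
  intro h
  obtain ⟨s, hst, hst'⟩ := exists_ne1 t t'
  have hts : t ≠ s := hst.symm
  have h1 := congrFun h (spr t s hts)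
  rw [tFam_spr_mem t hts (Or.inl rfl), tFam_spr_not t' hts htt hst'] at h1
  norm_num at h1

/-! ### non-proportionality -/

lemma prop_symm {f g : FlagIdx 5 → ℝ} (h : Proportional 5 f g) : Proportional 5 g f := by
  obtain ⟨c, hc, h⟩ := h
  exact ⟨c⁻¹, by positivity, fun p => by rw [h p, inv_mul_cancel_left₀ (ne_of_gt hc)]⟩

lemma kah_prop (σ τ : Equiv.Perm (Fin 6))
    (hP : Proportional 5 (kahlerFam 5 σ) (kahlerFam 5 τ)) :
    kahlerFam 5 σ = kahlerFam 5 τ := by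
  obtain ⟨c, hc, h⟩ := hP
  obtain ⟨p, hp⟩ := kah_exists_five σ
  obtain ⟨q, hq⟩ := kah_exists_five τ
  have h1 : c ≤ 1 := by
    have hq' := h q
    rw [hq] at hq'
    have := kah_le σ q
    nlinarith
  have h2 : 1 ≤ c := by
    have hp' := h p
    rw [hp] at hp'
    have := kah_le τ p
    nlinarith
  have hc1 : c = 1 := le_antisymm h1 h2
  funext p'
  rw [h p', hc1, one_mul]

lemma np_kah_tFam (σ : Equiv.Perm (Fin 6)) (t : Fin 6) :
    ¬ Proportional 5 (kahlerFam 5 σ) (tFam 5 t) := by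
  rintro ⟨c, hc, h⟩
  obtain ⟨a, b, hab, hat, -, hbt, -⟩ := exists_ne2 t t
  have e1 := h (spr a b hab)
  rw [kah_spr σ hab, tFam_spr_not t hab hat hbt, mul_one] at e1
  obtain ⟨s, hst, -⟩ := exists_ne1 t t
  have hts : t ≠ s := hst.symm
  have e0 := h (spr t s hts)
  rw [kah_spr σ hts, tFam_spr_mem t hts (Or.inl rfl)] at e0
  have key : (7 * Dd (σ t) (σ s) : ℕ) = (5 * Dd (σ a) (σ b) : ℕ) := by
    have : (7:ℝ) * (Dd (σ t) (σ s) : ℝ) = 5 * (Dd (σ a) (σ b) : ℝ) := by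
      rw [e0, ← e1]; ring
    exact_mod_cast this
  have b1 : 1 ≤ Dd (σ t) (σ s) := Dd_ge1 (fun hh => hts (σ.injective hh))
  have b2 : Dd (σ a) (σ b) ≤ 5 := Dd_le5 _ _
  have b3 : Dd (σ t) (σ s) ≤ 5 := Dd_le5 _ _
  have b4 : 1 ≤ Dd (σ a) (σ b) := Dd_ge1 (fun hh => hab (σ.injective hh))
  omega

lemma np_kah_const (σ : Equiv.Perm (Fin 6)) :
    ¬ Proportional 5 (kahlerFam 5 σ) (fun _ => (1:ℝ)) := by
  rintro ⟨c, hc, h⟩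
  obtain ⟨p, hp⟩ := kah_exists_five σ
  obtain ⟨q, hq⟩ := kah_exists_one σ
  have h1 := h p; have h2 := h q
  rw [hp] at h1; rw [hq] at h2
  simp only [mul_one] at h1 h2
  linarith

lemma np_tFam_tFam (t t' : Fin 6) (htt : t ≠ t') :
    ¬ Proportional 5 (tFam 5 t) (tFam 5 t') := by
  rintro ⟨c, hc, h⟩
  obtain ⟨s, hst, hst'⟩ := exists_ne1 t t'
  have hts : t ≠ s := hst.symm
  have e0 := h (spr t s hts)
  rw [tFam_spr_mem t hts (Or.inl rfl), tFam_spr_not t' hts htt hst'] at e0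
  obtain ⟨s', hs't', hs't⟩ := exists_ne1 t' t
  have ht's' : t' ≠ s' := hs't'.symm
  have e1 := h (spr t' s' ht's')
  rw [tFam_spr_not t ht's' htt.symm hs't, tFam_spr_mem t' ht's' (Or.inl rfl)] at e1
  rw [mul_one] at e0
  rw [← e0] at e1
  norm_num at e1

lemma np_tFam_const (t : Fin 6) :
    ¬ Proportional 5 (tFam 5 t) (fun _ => (1:ℝ)) := by
  rintro ⟨c, hc, h⟩
  obtain ⟨s, hst, -⟩ := exists_ne1 t t
  have hts : t ≠ s := hst.symm
  have e0 := h (spr t s hts)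
  rw [tFam_spr_mem t hts (Or.inl rfl), mul_one] at e0
  obtain ⟨a, b, hab, hat, -, hbt, -⟩ := exists_ne2 t t
  have e1 := h (spr a b hab)
  rw [tFam_spr_not t hab hat hbt, mul_one] at e1
  rw [← e1] at e0
  norm_num at e0

/-! ### injectivity up to reversal -/

lemma kah_inj (σ τ : Equiv.Perm (Fin 6)) (h : kahlerFam 5 σ = kahlerFam 5 τ) :
    τ = σ ∨ τ = Fin.revPerm * σ := by
  have hD : ∀ a b : Fin 6, a ≠ b → Dd (τ a) (τ b) = Dd (σ a) (σ b) := by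
    intro a b hab
    have := congrFun h (spr a b hab)
    rw [kah_spr σ hab, kah_spr τ hab] at this
    exact_mod_cast this.symm
  have hπ : ∀ u v : Fin 6, u ≠ v → Dd (τ (σ⁻¹ u)) (τ (σ⁻¹ v)) = Dd u v := by
    intro u v huv
    have := hD (σ⁻¹ u) (σ⁻¹ v) (fun hh => huv (by simpa using congrArg σ hh))
    simpa [Equiv.apply_symm_apply] using this
  set π : Equiv.Perm (Fin 6) := τ * σ⁻¹ with hπdef
  have hπ' : ∀ u v : Fin 6, u ≠ v → Dd (π u) (π v) = Dd u v := by
    intro u v huv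
    simpa [hπdef, Equiv.Perm.mul_apply] using hπ u v huv
  have h05 := hπ' 0 5 (by decide)
  rw [show Dd 0 5 = 5 from rfl, Dd_add] at h05
  have hl0 := (π 0).isLt
  have hl5 := (π 5).isLt
  have hcase : (π 0).val = 0 ∨ (π 0).val = 5 := by omega
  have hτπ : τ = π * σ := by
    ext x
    simp [hπdef, Equiv.Perm.mul_apply]
  rcases hcase with h0 | h0
  · left
    have hval : ∀ u : Fin 6, (π u).val = u.val := by
      intro u
      rcases eq_or_ne u 0 with rfl | hu
      · simpa using h0
      · have hd := hπ' u 0 hu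
        rw [Dd_add, Dd_add, h0, show ((0:Fin 6)).val = 0 from rfl] at hd
        have := (π u).isLt
        omega
    have hπ1 : π = 1 := Equiv.ext fun u => Fin.ext (hval u)
    rw [hτπ, hπ1, one_mul]
  · right
    have hval : ∀ u : Fin 6, (π u).val = 5 - u.val := by
      intro u
      rcases eq_or_ne u 0 with rfl | hu
      · simpa using h0
      · have hd := hπ' u 0 hu
        rw [Dd_add, Dd_add, h0, show ((0:Fin 6)).val = 0 from rfl] at hd
        have := (π u).isLt
        have := u.isLt
        omega
    have hπr : π = Fin.revPerm := by
      refine Equiv.ext fun u => Fin.ext ?_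
      rw [Fin.revPerm_apply, Fin.val_rev, hval u]
      omega
    rw [hτπ, hπr]

end SU6Aux2

/-- For `n = 5` (the flag manifold `SU(6)/T⁵`), there are at least
`367` pairwise non-proportional Einstein solutions: the `360` Kähler–Einstein
tuples, the `6` tuples `tFam 5 t` (with value `5/7` on pairs through `t`), and
the constant tuple `1`. -/
theorem su6_367_einstein (E : Set (FlagIdx 5 → ℝ))
    (hE : E = {f | ∃ σ : Equiv.Perm (Fin 6), f = kahlerFam 5 σ} ∪
              {f | ∃ t : Fin 6, f = tFam 5 t} ∪ {fun _ => 1}) :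
    (∀ f ∈ E, ∃ k : ℝ, IsEinstein 5 f k) ∧
    (∀ f ∈ E, ∀ g ∈ E, f ≠ g → ¬ Proportional 5 f g) ∧
    367 ≤ E.ncard := by
  classical
  subst hE
  refine ⟨?_, ?_, ?_⟩
  · rintro f ((⟨σ, rfl⟩ | ⟨t, rfl⟩) | rfl)
    · exact ⟨1/6, einstein_kahler σ⟩
    · exact ⟨28/75, einstein_tFam t⟩
    · exact ⟨1/3, einstein_const⟩
  · rintro f ((⟨σ, rfl⟩ | ⟨t, rfl⟩) | rfl) g ((⟨σ', rfl⟩ | ⟨t', rfl⟩) | rfl) hfg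
    · exact fun hP => hfg (kah_prop σ σ' hP)
    · exact np_kah_tFam σ t'
    · exact np_kah_const σ
    · exact fun hP => np_kah_tFam σ' t (prop_symm hP)
    · exact fun hP => np_tFam_tFam t t' (fun h => hfg (by rw [h])) hP
    · exact np_tFam_const t
    · exact fun hP => np_kah_const σ' (prop_symm hP)
    · exact fun hP => np_tFam_const t' (prop_symm hP)
    · exact absurd rfl hfg
  · set c1 : FlagIdx 5 → ℝ := fun _ => 1 with hc1
    set K : Finset (FlagIdx 5 → ℝ) := Finset.univ.image (kahlerFam 5) with hK
    set T : Finset (FlagIdx 5 → ℝ) := Finset.univ.image (tFam 5) with hT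
    have hKcard : 360 ≤ K.card := by
      have hfib : ∀ b ∈ Finset.univ.image (kahlerFam 5),
          (Finset.univ.filter (fun σ : Equiv.Perm (Fin 6) => kahlerFam 5 σ = b)).card ≤ 2 := by
        intro b hb
        obtain ⟨σ₀, -, rfl⟩ := Finset.mem_image.1 hb
        have hsub : (Finset.univ.filter
              (fun σ : Equiv.Perm (Fin 6) => kahlerFam 5 σ = kahlerFam 5 σ₀))
            ⊆ {σ₀, Fin.revPerm * σ₀} := by
          intro τ hτ
          have hτ' := (Finset.mem_filter.1 hτ).2
          have := kah_inj σ₀ τ hτ'.symm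
          simpa [Finset.mem_insert] using this
        calc _ ≤ ({σ₀, Fin.revPerm * σ₀} : Finset (Equiv.Perm (Fin 6))).card :=
              Finset.card_le_card hsub
          _ ≤ 2 := by
              refine le_trans (Finset.card_insert_le _ _) ?_
              simp
      have h720 : (Finset.univ : Finset (Equiv.Perm (Fin 6))).card = 720 := by
        simp [Finset.card_univ, Fintype.card_perm, Fintype.card_fin]
        norm_num [Nat.factorial]
      have := Finset.card_le_mul_card_image (f := kahlerFam 5) Finset.univ 2 hfib
      rw [h720] at this
      rw [hK]
      omega
    have hTcard : T.card = 6 := by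
      rw [hT, Finset.card_image_of_injective _
        (fun t t' h => by_contra fun hne => tFam_ne t t' hne h)]
      simp
    have hc1T : c1 ∉ T := by
      intro hmem
      obtain ⟨t, -, ht⟩ := Finset.mem_image.1 hmem
      exact tFam_ne_const t ht
    have hdisj2 : Disjoint T ({c1} : Finset (FlagIdx 5 → ℝ)) := by
      simpa using hc1T
    have hdisj1 : Disjoint K (T ∪ {c1}) := by
      rw [Finset.disjoint_left]
      intro x hx hx'
      obtain ⟨σ, -, rfl⟩ := Finset.mem_image.1 hx
      rcases Finset.mem_union.1 hx' with hx' | hx'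
      · obtain ⟨t, -, ht⟩ := Finset.mem_image.1 hx'
        exact kah_ne_tFam σ t ht.symm
      · exact kah_ne_const σ (Finset.mem_singleton.1 hx')
    have hFcard : 367 ≤ (K ∪ (T ∪ {c1})).card := by
      rw [Finset.card_union_of_disjoint hdisj1, Finset.card_union_of_disjoint hdisj2,
        hTcard, Finset.card_singleton]
      omega
    have hsub : ((K ∪ (T ∪ {c1}) : Finset (FlagIdx 5 → ℝ)) : Set (FlagIdx 5 → ℝ)) ⊆
        {f | ∃ σ : Equiv.Perm (Fin 6), f = kahlerFam 5 σ} ∪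
          {f | ∃ t : Fin 6, f = tFam 5 t} ∪ {fun _ => 1} := by
      intro x hx
      rw [Finset.mem_coe] at hx
      rcases Finset.mem_union.1 hx with hx | hx
      · obtain ⟨σ, -, rfl⟩ := Finset.mem_image.1 hx
        exact Or.inl (Or.inl ⟨σ, rfl⟩)
      · rcases Finset.mem_union.1 hx with hx | hx
        · obtain ⟨t, -, rfl⟩ := Finset.mem_image.1 hx
          exact Or.inl (Or.inr ⟨t, rfl⟩)
        · exact Or.inr (Finset.mem_singleton.1 hx)
    have hfin : ({f | ∃ σ : Equiv.Perm (Fin 6), f = kahlerFam 5 σ} ∪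
          {f | ∃ t : Fin 6, f = tFam 5 t} ∪ {fun _ => (1:ℝ)} :
          Set (FlagIdx 5 → ℝ)).Finite := by
      refine Set.Finite.union (Set.Finite.union ?_ ?_) (Set.finite_singleton _)
      · exact Set.Finite.subset (Set.finite_range (kahlerFam 5))
          (fun f ⟨σ, hf⟩ => ⟨σ, hf.symm⟩)
      · exact Set.Finite.subset (Set.finite_range (tFam 5))
          (fun f ⟨t, hf⟩ => ⟨t, hf.symm⟩)
    calc (367 : ℕ) ≤ (K ∪ (T ∪ {c1})).card := hFcard
      _ = ((K ∪ (T ∪ {c1}) : Finset (FlagIdx 5 → ℝ)) : Set (FlagIdx 5 → ℝ)).ncard :=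
          (Set.ncard_coe_finset _).symm
      _ ≤ _ := Set.ncard_le_ncard hsub hfin
end

section
/- For n = 4 and any fixed t ∈ {1, …, 5}, the family defined by λ_{ij} = 2/3 if t ∈ {i,j} and λ_{ij} = 1 otherwise is an Einstein solution with Einstein constant 33/80, and its scalar curvature is S(λ) = 33/4. -/
open Finset

set_option maxHeartbeats 4000000 in
/-- For `n = 4` and any `t ∈ {1, …, 5}`, the family
`λ_{ij} = 2/3` if `t ∈ {i,j}` and `λ_{ij} = 1` otherwise (i.e. `tFam 4 t`, since
`4/(4+2) = 2/3`) is an Einstein solution with Einstein constant `33/80`, and its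
scalar curvature is `33/4`. -/
theorem su5_tFam_einstein (t : Fin 5) :
    IsEinstein 4 (fun p => if p.1.1 = t ∨ p.1.2 = t then (2 : ℝ) / 3 else 1) (33 / 80) ∧
    scalarCurv 4 (fun p => if p.1.1 = t ∨ p.1.2 = t then (2 : ℝ) / 3 else 1) = 33 / 4 := by
  have hE : IsEinstein 4
      (fun p => if p.1.1 = t ∨ p.1.2 = t then (2 : ℝ) / 3 else 1) (33 / 80) := by
    intro i j hij
    fin_cases t <;> fin_cases i <;> fin_cases j <;>
      first
        | exact absurd hij (by decide)
        | (simp only [ricci, symExt, Finset.sum_filter]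
           rw [Fin.sum_univ_five]
           norm_num [Fin.lt_def, Fin.ext_iff, show ((3:Fin 5):ℕ)=3 from rfl,
             show ((4:Fin 5):ℕ)=4 from rfl, show ((2:Fin 5):ℕ)=2 from rfl,
             show ((1:Fin 5):ℕ)=1 from rfl, show ((0:Fin 5):ℕ)=0 from rfl])
  refine ⟨hE, ?_⟩
  unfold scalarCurv
  rw [Finset.sum_congr rfl (fun p _ => hE p.1.1 p.1.2 p.2)]
  rw [Finset.sum_const, Finset.card_univ]
  have : Fintype.card (FlagIdx 4) = 10 := by decide
  rw [this]; norm_num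
end

section
/- For n = 4 and any fixed t ∈ {1, …, 5}, the family defined by λ_{ij} = 1 if t ∈ {i,j} and λ_{ij} = 3/2 otherwise is an Einstein solution with Einstein constant 11/40, and its scalar curvature is S(λ) = 11/2. Moreover, this family equals 3/2 times the family (2/3 if t ∈ {i,j}, else 1), so the two are homothetic. -/
open Finset

section Aux

private lemma symExt_tfam (t i j : Fin 5) :
    symExt 4 (fun p : FlagIdx 4 => if p.1.1 = t ∨ p.1.2 = t then (1 : ℝ) else 3 / 2) i j
      = if i = j then 1 else if i = t ∨ j = t then 1 else 3 / 2 := by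
  unfold symExt
  rcases lt_trichotomy i j with h | h | h
  · rw [dif_pos h]
    simp [h.ne]
  · simp [h]
  · rw [dif_neg (not_lt_of_gt h), dif_pos h]
    simp [h.ne', or_comm]

private lemma filter_card (i j : Fin 5) (hij : i ≠ j) :
    (Finset.univ.filter (fun k : Fin 5 => k ≠ i ∧ k ≠ j)) = Finset.univ \ {i, j} := by
  ext k; simp [and_comm]

private lemma card_filter (i j : Fin 5) (hij : i ≠ j) :
    (Finset.univ.filter (fun k : Fin 5 => k ≠ i ∧ k ≠ j)).card = 3 := by
  rw [filter_card i j hij, Finset.card_sdiff_of_subset (by simp)]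
  rw [Finset.card_insert_of_notMem (by simpa using hij), Finset.card_singleton]
  simp

private lemma ricci_tfam (t i j : Fin 5) (hij : i < j) :
    ricci 4 (fun p : FlagIdx 4 => if p.1.1 = t ∨ p.1.2 = t then (1 : ℝ) else 3 / 2) i j
      = 11 / 40 := by
  have hne : i ≠ j := hij.ne
  unfold ricci
  simp only [symExt_tfam]
  by_cases ht : i = t ∨ j = t
  · -- t ∈ {i, j}; every term of the sum equals -3/2
    have hsum : ∑ k ∈ Finset.univ.filter (fun k : Fin 5 => k ≠ i ∧ k ≠ j),
        ((if i = j then (1:ℝ) else if i = t ∨ j = t then 1 else 3/2) /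
            ((if i = k then 1 else if i = t ∨ k = t then 1 else 3/2) *
             (if k = j then 1 else if k = t ∨ j = t then 1 else 3/2))
          - (if i = k then (1:ℝ) else if i = t ∨ k = t then 1 else 3/2) /
            ((if i = j then 1 else if i = t ∨ j = t then 1 else 3/2) *
             (if k = j then 1 else if k = t ∨ j = t then 1 else 3/2))
          - (if j = k then (1:ℝ) else if j = t ∨ k = t then 1 else 3/2) /
            ((if i = j then 1 else if i = t ∨ j = t then 1 else 3/2) *
             (if i = k then 1 else if i = t ∨ k = t then 1 else 3/2)))
        = ∑ k ∈ Finset.univ.filter (fun k : Fin 5 => k ≠ i ∧ k ≠ j), (-3/2 : ℝ) := by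
      refine Finset.sum_congr rfl fun k hk => ?_
      simp only [Finset.mem_filter, Finset.mem_univ, true_and] at hk
      obtain ⟨hki, hkj⟩ := hk
      rcases ht with h | h
      · subst h
        have hkt : ¬ k = i := hki
        simp [hne, hne.symm, hkj.symm, hki.symm, hki, hkj, Ne.symm hkj]
        norm_num [hki]
      · subst h
        simp [hne, hne.symm, hkj.symm, hki.symm, hki, hkj, Ne.symm hki]
        norm_num [hkj]
    rw [hsum, Finset.sum_const, card_filter i j hne]
    rw [if_neg hne, if_pos ht]
    norm_num
  · -- t ∉ {i, j}: term is 1/6 if k = t, else -2/3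
    push_neg at ht
    obtain ⟨hit, hjt⟩ := ht
    have hsum : ∑ k ∈ Finset.univ.filter (fun k : Fin 5 => k ≠ i ∧ k ≠ j),
        ((if i = j then (1:ℝ) else if i = t ∨ j = t then 1 else 3/2) /
            ((if i = k then 1 else if i = t ∨ k = t then 1 else 3/2) *
             (if k = j then 1 else if k = t ∨ j = t then 1 else 3/2))
          - (if i = k then (1:ℝ) else if i = t ∨ k = t then 1 else 3/2) /
            ((if i = j then 1 else if i = t ∨ j = t then 1 else 3/2) *
             (if k = j then 1 else if k = t ∨ j = t then 1 else 3/2))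
          - (if j = k then (1:ℝ) else if j = t ∨ k = t then 1 else 3/2) /
            ((if i = j then 1 else if i = t ∨ j = t then 1 else 3/2) *
             (if i = k then 1 else if i = t ∨ k = t then 1 else 3/2)))
        = ∑ k ∈ Finset.univ.filter (fun k : Fin 5 => k ≠ i ∧ k ≠ j),
            ((if k = t then (1/6 : ℝ) - (-2/3) else 0) + (-2/3)) := by
      refine Finset.sum_congr rfl fun k hk => ?_
      simp only [Finset.mem_filter, Finset.mem_univ, true_and] at hk
      obtain ⟨hki, hkj⟩ := hk
      by_cases hkt : k = t
      · subst hkt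
        simp [hne, hit, hjt, hki, hkj, Ne.symm hki, Ne.symm hkj]
        norm_num
      · simp [hne, hit, hjt, hki, hkj, Ne.symm hki, Ne.symm hkj, hkt, Ne.symm hkt]
        norm_num
    rw [hsum, Finset.sum_add_distrib, Finset.sum_ite_eq' _ t, Finset.sum_const,
      card_filter i j hne]
    have htmem : t ∈ Finset.univ.filter (fun k : Fin 5 => k ≠ i ∧ k ≠ j) := by
      simp [Ne.symm hit, Ne.symm hjt]
    rw [if_pos htmem]
    simp only [hne, hit, hjt, if_false, or_self]
    norm_num

end Aux

/-- For `n = 4` and any `t ∈ {1, …, 5}`, the family `λ_{ij} = 1`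
if `t ∈ {i,j}` and `λ_{ij} = 3/2` otherwise is an Einstein solution with
Einstein constant `11/40` and scalar curvature `11/2`; moreover it equals `3/2`
times the family `(2/3 if t ∈ {i,j}, else 1)`, so the two are homothetic. -/
theorem su5_tFam_homothetic (t : Fin 5) :
    IsEinstein 4 (fun p => if p.1.1 = t ∨ p.1.2 = t then (1 : ℝ) else 3 / 2) (11 / 40) ∧
    scalarCurv 4 (fun p => if p.1.1 = t ∨ p.1.2 = t then (1 : ℝ) else 3 / 2) = 11 / 2 ∧
    (fun p : FlagIdx 4 => if p.1.1 = t ∨ p.1.2 = t then (1 : ℝ) else 3 / 2) =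
      (fun p : FlagIdx 4 =>
        3 / 2 * (if p.1.1 = t ∨ p.1.2 = t then (2 : ℝ) / 3 else 1)) := by
  have hE : IsEinstein 4 (fun p => if p.1.1 = t ∨ p.1.2 = t then (1 : ℝ) else 3 / 2)
      (11 / 40) := fun i j hij => ricci_tfam t i j hij
  refine ⟨hE, ?_, ?_⟩
  · unfold scalarCurv
    rw [Finset.sum_congr rfl (fun p _ => hE p.1.1 p.1.2 p.2), Finset.sum_const,
      Finset.card_univ]
    norm_num [show Fintype.card (FlagIdx 4) = 10 from by decide]
  · funext p
    by_cases h : p.1.1 = t ∨ p.1.2 = t <;> simp [h] <;> norm_num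
end
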